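/- arXiv:1907.11924 — 3 statements merged into one kernel-verified Lean document; each statement's English description precedes it below -/
import Mathlib

section
/- Let g be a real monic polynomial of degree n with n₁ distinct real roots and n₂ pairs of complex conjugate non-real roots (n₁ + 2n₂ = n), such that g' has distinct real roots c₁,...,c_r (and possibly non-real roots). Then the signed count Σᵢ sign(−g''(cᵢ)/g(cᵢ)) equals n₁ − 1. -/
open Polynomial Finset Filter

section Helpers

lemma evalSameSign (p : Polynomial ℝ) {x y : ℝ} (hxy : x ≤ y)
    (h : ∀ z ∈ Set.Icc x y, p.eval z ≠ 0) : 0 < p.eval x * p.eval y := by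
  have hcont : ContinuousOn (fun t => p.eval t) (Set.Icc x y) := p.continuous.continuousOn
  rcases lt_trichotomy (p.eval x) 0 with hx | hx | hx
  · rcases lt_trichotomy (p.eval y) 0 with hy | hy | hy
    · exact mul_pos_of_neg_of_neg hx hy
    · exact absurd hy (h y ⟨hxy, le_rfl⟩)
    · obtain ⟨z, hz, hz0⟩ := intermediate_value_Icc hxy hcont ⟨hx.le, hy.le⟩
      exact absurd hz0 (h z hz)
  · exact absurd hx (h x ⟨le_rfl, hxy⟩)
  · rcases lt_trichotomy (p.eval y) 0 with hy | hy | hy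
    · obtain ⟨z, hz, hz0⟩ := intermediate_value_Icc' hxy hcont ⟨hy.le, hx.le⟩
      exact absurd hz0 (h z hz)
    · exact absurd hy (h y ⟨hxy, le_rfl⟩)
    · exact mul_pos hx hy

lemma strictMonoOn_eval (g : Polynomial ℝ) {x y : ℝ}
    (hd : ∀ z ∈ Set.Ioo x y, 0 < (derivative g).eval z) :
    StrictMonoOn (fun t => g.eval t) (Set.Icc x y) := by
  apply strictMonoOn_of_deriv_pos (convex_Icc x y) g.continuous.continuousOn
  intro z hz
  rw [interior_Icc] at hz
  rw [Polynomial.deriv]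
  exact hd z hz

lemma strictAntiOn_eval (g : Polynomial ℝ) {x y : ℝ}
    (hd : ∀ z ∈ Set.Ioo x y, (derivative g).eval z < 0) :
    StrictAntiOn (fun t => g.eval t) (Set.Icc x y) := by
  apply strictAntiOn_of_deriv_neg (convex_Icc x y) g.continuous.continuousOn
  intro z hz
  rw [interior_Icc] at hz
  rw [Polynomial.deriv]
  exact hd z hz

lemma count_Ioo {n₁ : ℕ} (g : Polynomial ℝ) (a : Fin n₁ → ℝ) (ha : Function.Injective a)
    (hroots : ∀ x, g.eval x = 0 ↔ ∃ i, a i = x) {x y : ℝ} (hxy : x < y)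
    (hder : ∀ z ∈ Set.Ioo x y, (derivative g).eval z ≠ 0) :
    ((Finset.univ : Finset (Fin n₁)).filter (fun j => a j ∈ Set.Ioo x y)).card
      = if g.eval x * g.eval y < 0 then 1 else 0 := by
  have hm : (x + y) / 2 ∈ Set.Ioo x y := ⟨by linarith, by linarith⟩
  have hsign : (∀ z ∈ Set.Ioo x y, 0 < (derivative g).eval z) ∨
      (∀ z ∈ Set.Ioo x y, (derivative g).eval z < 0) := by
    set m := (x + y) / 2
    have key : ∀ z ∈ Set.Ioo x y, 0 < (derivative g).eval z * (derivative g).eval m := by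
      intro z hz
      rcases le_total z m with h | h
      · exact evalSameSign _ h
          (fun w hw => hder w ⟨lt_of_lt_of_le hz.1 hw.1, lt_of_le_of_lt hw.2 hm.2⟩)
      · have := evalSameSign (derivative g) h
          (fun w hw => hder w ⟨lt_of_lt_of_le hm.1 hw.1, lt_of_le_of_lt hw.2 hz.2⟩)
        linarith [this]
    rcases (hder _ hm).lt_or_gt with h | h
    · right; intro z hz; nlinarith [key z hz]
    · left; intro z hz; nlinarith [key z hz]
  have hmono : StrictMonoOn (fun t => g.eval t) (Set.Icc x y) ∨
      StrictAntiOn (fun t => g.eval t) (Set.Icc x y) := by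
    rcases hsign with h | h
    · exact Or.inl (strictMonoOn_eval g h)
    · exact Or.inr (strictAntiOn_eval g h)
  by_cases hlt : g.eval x * g.eval y < 0
  · rw [if_pos hlt]
    have hcont : ContinuousOn (fun t => g.eval t) (Set.Icc x y) := g.continuous.continuousOn
    have hex : ∃ z ∈ Set.Ioo x y, g.eval z = 0 := by
      rcases mul_neg_iff.mp hlt with ⟨h1, h2⟩ | ⟨h1, h2⟩
      · obtain ⟨z, hz, hz0⟩ := intermediate_value_Ioo' hxy.le hcont (Set.mem_Ioo.mpr ⟨h2, h1⟩)
        exact ⟨z, hz, hz0⟩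
      · obtain ⟨z, hz, hz0⟩ := intermediate_value_Ioo hxy.le hcont (Set.mem_Ioo.mpr ⟨h1, h2⟩)
        exact ⟨z, hz, hz0⟩
    obtain ⟨z, hzIoo, hz0⟩ := hex
    obtain ⟨j₀, hj₀⟩ := (hroots z).mp hz0
    have hinj : Set.InjOn (fun t => g.eval t) (Set.Icc x y) := by
      rcases hmono with h | h
      · exact h.injOn
      · exact h.injOn
    rw [Finset.card_eq_one]
    refine ⟨j₀, ?_⟩
    ext j
    simp only [Finset.mem_filter, Finset.mem_univ, true_and, Finset.mem_singleton]
    constructor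
    · intro hj
      have hrj : g.eval (a j) = 0 := (hroots (a j)).mpr ⟨j, rfl⟩
      have : a j = z := hinj (Set.mem_Icc_of_Ioo hj) (Set.mem_Icc_of_Ioo hzIoo)
        (by simp [hrj, hz0])
      exact ha (this.trans hj₀.symm)
    · intro hj; subst hj; rw [hj₀]; exact hzIoo
  · rw [if_neg hlt]
    rw [Finset.card_eq_zero, Finset.filter_eq_empty_iff]
    intro j _
    intro hj
    have hr : g.eval (a j) = 0 := (hroots (a j)).mpr ⟨j, rfl⟩
    have hxIcc : x ∈ Set.Icc x y := ⟨le_rfl, hxy.le⟩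
    have hyIcc : y ∈ Set.Icc x y := ⟨hxy.le, le_rfl⟩
    have hjIcc : a j ∈ Set.Icc x y := Set.mem_Icc_of_Ioo hj
    rcases hmono with h | h
    · have h1 := h hxIcc hjIcc hj.1
      have h2 := h hjIcc hyIcc hj.2
      simp only [hr] at h1 h2
      exact hlt (mul_neg_of_neg_of_pos h1 h2)
    · have h1 := h hxIcc hjIcc hj.1
      have h2 := h hjIcc hyIcc hj.2
      simp only [hr] at h1 h2
      exact hlt (mul_neg_of_pos_of_neg h1 h2)

lemma comb (r : ℕ) (W : ℕ → ℝ) (h0 : ∀ k, k ≤ r → W k ≠ 0)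
    (hadj : ∀ k, k < r → ¬(0 < W k ∧ 0 < W (k+1))) :
    ((if W 0 < 0 then (1:ℤ) else 0)
      + (∑ k ∈ Finset.range r, if 0 < W k * W (k+1) then (1:ℤ) else 0)
      + (if W r < 0 then (1:ℤ) else 0))
      = (∑ k ∈ Finset.range (r+1), if W k < 0 then (1:ℤ) else -1) + 1 := by
  induction r with
  | zero =>
    simp only [Finset.range_zero, Finset.sum_empty, Finset.range_one, Finset.sum_singleton]
    by_cases h : W 0 < 0 <;> simp [h]
  | succ r ih =>
    have ih' := ih (fun k hk => h0 k (by omega)) (fun k hk => hadj k (by omega))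
    rw [Finset.sum_range_succ, Finset.sum_range_succ (f := fun k => if W k < 0 then (1:ℤ) else -1)]
    rcases (h0 r (by omega)).lt_or_gt with hr | hr <;>
      rcases (h0 (r+1) (by omega)).lt_or_gt with hr1 | hr1
    · have : 0 < W r * W (r+1) := mul_pos_of_neg_of_neg hr hr1
      simp only [if_pos this, if_pos hr, if_pos hr1] at *
      omega
    · have : ¬ (0 < W r * W (r+1)) := by nlinarith
      simp only [if_neg this, if_pos hr, if_neg (asymm hr1)] at *
      omega
    · have : ¬ (0 < W r * W (r+1)) := by nlinarith
      simp only [if_neg this, if_neg (asymm hr), if_pos hr1] at *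
      omega
    · exact absurd ⟨hr, hr1⟩ (hadj r (by omega))

lemma realFactor {n₁ n₂ : ℕ} (g : Polynomial ℝ) (a : Fin n₁ → ℝ) (b : Fin n₂ → ℂ)
    (hfact : g.map (algebraMap ℝ ℂ) =
      (∏ i : Fin n₁, (X - C ((a i : ℂ)))) *
        ∏ j : Fin n₂, ((X - C (b j)) * (X - C (starRingEnd ℂ (b j))))) :
    g = (∏ i : Fin n₁, (X - C (a i))) *
        ∏ j : Fin n₂, (X^2 - C (2 * (b j).re) * X + C (Complex.normSq (b j))) := by
  apply Polynomial.map_injective (algebraMap ℝ ℂ) (algebraMap ℝ ℂ).injective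
  rw [hfact]
  rw [Polynomial.map_mul]
  congr 1
  · rw [Polynomial.map_prod]
    symm
    refine Finset.prod_congr rfl (fun i _ => ?_)
    simp
  · rw [Polynomial.map_prod]
    symm
    refine Finset.prod_congr rfl (fun j _ => ?_)
    have h1 : b j + starRingEnd ℂ (b j) = ((2 * (b j).re : ℝ) : ℂ) := by
      rw [Complex.add_conj]
    have h2 : b j * starRingEnd ℂ (b j) = ((Complex.normSq (b j) : ℝ) : ℂ) := Complex.mul_conj _
    simp only [Polynomial.map_add, Polynomial.map_sub, Polynomial.map_mul, Polynomial.map_pow,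
      Polynomial.map_X, Polynomial.map_C]
    have e1 : (algebraMap ℝ ℂ) (2 * (b j).re) = b j + starRingEnd ℂ (b j) := by
      rw [h1]; rfl
    have e2 : (algebraMap ℝ ℂ) (Complex.normSq (b j)) = b j * starRingEnd ℂ (b j) := by
      rw [h2]; rfl
    rw [e1, e2, Polynomial.C_add, Polynomial.C_mul]
    ring

lemma mul_sign_neg_of {A u v : ℝ} (h1 : 0 < A * u) (h2 : A * v < 0) : u * v < 0 := by
  rcases lt_trichotomy A 0 with h | h | h
  · have hu : u < 0 := by nlinarith
    have hv : 0 < v := by nlinarith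
    exact mul_neg_of_neg_of_pos hu hv
  · rw [h, zero_mul] at h1; exact absurd h1 (lt_irrefl 0)
  · have hu : 0 < u := by nlinarith
    have hv : v < 0 := by nlinarith
    exact mul_neg_of_pos_of_neg hu hv

end Helpers

set_option maxHeartbeats 1600000 in
/-- Let `g` be a real monic polynomial of degree `n` with `n₁` distinct real roots and `n₂`
pairs of complex conjugate non-real roots (`n₁ + 2n₂ = n`), such that the real roots of `g'`
are simple and are exactly the distinct points `c₁, ..., c_r`.  Then the signed count
`Σᵢ sign(−g''(cᵢ)/g(cᵢ))` equals `n₁ − 1`. -/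
theorem stmt6 (n n₁ n₂ r : ℕ) (g : Polynomial ℝ) (hm : g.Monic) (hdeg : g.natDegree = n)
    (hn : n₁ + 2 * n₂ = n)
    (a : Fin n₁ → ℝ) (ha : Function.Injective a)
    (b : Fin n₂ → ℂ) (hb : ∀ j, (b j).im ≠ 0)
    (hfact : g.map (algebraMap ℝ ℂ) =
      (∏ i : Fin n₁, (X - C ((a i : ℂ)))) *
        ∏ j : Fin n₂, ((X - C (b j)) * (X - C (starRingEnd ℂ (b j)))))
    (c : Fin r → ℝ) (hc : StrictMono c)
    (hcrit : ∀ x : ℝ, (derivative g).eval x = 0 ↔ ∃ i, c i = x)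
    (hsimple : ∀ x : ℝ, ¬ ((X - C x) ^ 2 ∣ derivative g)) :
    (∑ i : Fin r,
        if 0 < -((derivative (derivative g)).eval (c i)) / g.eval (c i) then (1 : ℤ) else -1)
      = (n₁ : ℤ) - 1 := by
  classical
  -- basic degree facts
  have hder_ne : derivative g ≠ 0 := fun h => hsimple 0 (by rw [h]; exact dvd_zero _)
  have hndeg : g.natDegree ≠ 0 := by
    intro h
    obtain ⟨x, hx⟩ := Polynomial.natDegree_eq_zero.mp h
    exact hder_ne (by rw [← hx, derivative_C])
  have hdegpos : 0 < g.degree :=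
    Polynomial.natDegree_pos_iff_degree_pos.mp (Nat.pos_of_ne_zero hndeg)
  -- real factorization
  set Q : Polynomial ℝ :=
    ∏ j : Fin n₂, (X^2 - C (2 * (b j).re) * X + C (Complex.normSq (b j))) with hQdef
  have hg : g = (∏ i : Fin n₁, (X - C (a i))) * Q := realFactor g a b hfact
  have hQpos : ∀ x : ℝ, 0 < Q.eval x := by
    intro x
    rw [hQdef, Polynomial.eval_prod]
    apply Finset.prod_pos
    intro j _
    have : ((X:Polynomial ℝ)^2 - C (2 * (b j).re) * X + C (Complex.normSq (b j))).eval x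
        = (x - (b j).re)^2 + (b j).im^2 := by
      simp [Complex.normSq_apply]; ring
    rw [this]
    have := hb j
    positivity
  have hgeval : ∀ x : ℝ, g.eval x = (∏ i : Fin n₁, (x - a i)) * Q.eval x := by
    intro x
    rw [hg]
    simp [Polynomial.eval_prod]
  have hroots : ∀ x : ℝ, g.eval x = 0 ↔ ∃ i, a i = x := by
    intro x
    rw [hgeval x]
    constructor
    · intro h
      rcases mul_eq_zero.mp h with h | h
      · obtain ⟨i, _, hi⟩ := Finset.prod_eq_zero_iff.mp h
        exact ⟨i, by linarith [sub_eq_zero.mp hi]⟩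
      · exact absurd h (ne_of_gt (hQpos x))
    · rintro ⟨i, rfl⟩
      rw [Finset.prod_eq_zero (Finset.mem_univ i) (by ring), zero_mul]
  -- roots of g are simple
  have hgc_a : ∀ j : Fin n₁, (derivative g).eval (a j) ≠ 0 := by
    intro j
    have hsplit : g = (X - C (a j)) *
        ((∏ i ∈ Finset.univ.erase j, (X - C (a i))) * Q) := by
      rw [hg, ← Finset.mul_prod_erase Finset.univ _ (Finset.mem_univ j), mul_assoc]
    have : derivative g = ((∏ i ∈ Finset.univ.erase j, (X - C (a i))) * Q)
        + (X - C (a j)) * derivative ((∏ i ∈ Finset.univ.erase j, (X - C (a i))) * Q) := by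
      rw [hsplit]
      rw [derivative_mul]
      simp
    rw [this]
    simp only [Polynomial.eval_add, Polynomial.eval_mul, Polynomial.eval_sub, Polynomial.eval_X,
      Polynomial.eval_C, sub_self, zero_mul, add_zero, Polynomial.eval_prod]
    intro h
    rcases mul_eq_zero.mp h with h | h
    · obtain ⟨i, hi, hi0⟩ := Finset.prod_eq_zero_iff.mp h
      have : a i = a j := by linarith [sub_eq_zero.mp hi0]
      exact (Finset.mem_erase.mp hi).1 (ha this)
    · exact absurd h (ne_of_gt (hQpos (a j)))
  have hgcne : ∀ i : Fin r, g.eval (c i) ≠ 0 := by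
    intro i h
    obtain ⟨j, hj⟩ := (hroots (c i)).mp h
    apply hgc_a j
    rw [hj]
    exact (hcrit (c i)).mpr ⟨i, rfl⟩
  -- local factorization at each critical point
  have hloc : ∀ i : Fin r, ∃ h : Polynomial ℝ,
      (∀ x : ℝ, (derivative g).eval x = (x - c i) * h.eval x) ∧
      h.eval (c i) = (derivative (derivative g)).eval (c i) ∧
      (derivative (derivative g)).eval (c i) ≠ 0 := by
    intro i
    have hroot : (derivative g).IsRoot (c i) := (hcrit (c i)).mpr ⟨i, rfl⟩
    obtain ⟨h, hfac⟩ := (Polynomial.dvd_iff_isRoot.mpr hroot)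
    have hhc : h.eval (c i) ≠ 0 := by
      intro h0
      apply hsimple (c i)
      obtain ⟨k, hk⟩ := Polynomial.dvd_iff_isRoot.mpr h0
      exact ⟨k, by rw [hfac, hk]; ring⟩
    have h2eval : (derivative (derivative g)).eval (c i) = h.eval (c i) := by
      rw [hfac, derivative_mul]
      simp
    exact ⟨h, fun x => by rw [hfac]; simp, h2eval.symm, by rw [h2eval]; exact hhc⟩
  have hg2ne : ∀ i : Fin r, (derivative (derivative g)).eval (c i) ≠ 0 :=
    fun i => (hloc i).choose_spec.2.2
  -- sign of g' to the right of a critical point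
  have keyR : ∀ (i : Fin r) (x : ℝ), c i < x → (∀ j : Fin r, c j ≤ c i ∨ x < c j) →
      0 < (derivative g).eval x * (derivative (derivative g)).eval (c i) := by
    intro i x hix hcond
    obtain ⟨h, hfac, hhc, hne⟩ := hloc i
    have hno : ∀ z ∈ Set.Icc (c i) x, h.eval z ≠ 0 := by
      intro z hz h0
      have hz0 : (derivative g).eval z = 0 := by rw [hfac z, h0, mul_zero]
      obtain ⟨j, hj⟩ := (hcrit z).mp hz0
      rcases hcond j with hle | hgt
      · have : z = c i := le_antisymm (hj ▸ hle) hz.1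
        rw [this, hhc] at h0
        exact hne h0
      · rw [hj] at hgt
        exact absurd hz.2 (not_le.mpr hgt)
    have hss := evalSameSign h hix.le hno
    have := hfac x
    rw [this, ← hhc]
    nlinarith [hss]
  -- sign of g' to the left of a critical point
  have keyL : ∀ (i : Fin r) (x : ℝ), x < c i → (∀ j : Fin r, c i ≤ c j ∨ c j < x) →
      (derivative g).eval x * (derivative (derivative g)).eval (c i) < 0 := by
    intro i x hix hcond
    obtain ⟨h, hfac, hhc, hne⟩ := hloc i
    have hno : ∀ z ∈ Set.Icc x (c i), h.eval z ≠ 0 := by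
      intro z hz h0
      have hz0 : (derivative g).eval z = 0 := by rw [hfac z, h0, mul_zero]
      obtain ⟨j, hj⟩ := (hcrit z).mp hz0
      rcases hcond j with hle | hgt
      · have : z = c i := le_antisymm hz.2 (hj ▸ hle)
        rw [this, hhc] at h0
        exact hne h0
      · rw [hj] at hgt
        exact absurd hz.1 (not_le.mpr hgt)
    have hss := evalSameSign h hix.le hno
    have := hfac x
    rw [this, ← hhc]
    nlinarith [hss]
  -- behaviour at infinity
  have hT : Filter.Tendsto (fun x => g.eval x) Filter.atTop Filter.atTop :=
    Polynomial.tendsto_atTop_of_leadingCoeff_nonneg g hdegpos (by rw [hm.leadingCoeff]; norm_num)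
  have hTB : Filter.Tendsto (fun t => |g.eval (-t)|) Filter.atTop Filter.atTop := by
    have hGdeg : 0 < (g.comp (-X)).degree := by
      apply Polynomial.natDegree_pos_iff_degree_pos.mp
      rw [Polynomial.natDegree_comp]
      simp only [Polynomial.natDegree_neg, Polynomial.natDegree_X, mul_one]
      exact Nat.pos_of_ne_zero hndeg
    have := Polynomial.abs_tendsto_atTop (g.comp (-X)) hGdeg
    convert this using 2 with t
    rw [Polynomial.eval_comp]
    simp
  rcases Nat.eq_zero_or_pos r with hr0 | hrpos
  · -- no critical points: g is strictly monotone, exactly one real root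
    subst hr0
    have hnz : ∀ z : ℝ, (derivative g).eval z ≠ 0 := by
      intro z h
      obtain ⟨i, _⟩ := (hcrit z).mp h
      exact i.elim0
    -- n₁ ≤ 1 by Rolle
    have hn1le : n₁ ≤ 1 := by
      by_contra hle
      push_neg at hle
      have h01 : (⟨0, by omega⟩ : Fin n₁) ≠ ⟨1, by omega⟩ := by
        intro h; simpa using congrArg Fin.val h
      have hane : a ⟨0, by omega⟩ ≠ a ⟨1, by omega⟩ := fun h => h01 (ha h)
      rcases hane.lt_or_gt with hlt | hlt
      all_goals {
        obtain ⟨z, _, hz⟩ := exists_deriv_eq_zero hlt g.continuous.continuousOn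
          (by rw [(hroots _).mpr ⟨_, rfl⟩, (hroots _).mpr ⟨_, rfl⟩])
        rw [Polynomial.deriv] at hz
        exact hnz z hz
      }
    have hn1ne : n₁ ≠ 0 := by
      intro h0
      have hnoroot : ∀ x : ℝ, g.eval x ≠ 0 := by
        intro x hx
        obtain ⟨i, _⟩ := (hroots x).mp hx
        have := i.isLt
        omega
      obtain ⟨t₀, ht₀⟩ := (hT.eventually_gt_atTop 0).exists
      have same : ∀ x y : ℝ, x ≤ y → 0 < g.eval x * g.eval y :=
        fun x y h => evalSameSign g h (fun z _ => hnoroot z)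
      have hgpos : ∀ x : ℝ, 0 < g.eval x := by
        intro x
        rcases le_total x t₀ with h | h
        · nlinarith [same x t₀ h]
        · nlinarith [same t₀ x h]
      have samed : ∀ x y : ℝ, x ≤ y → 0 < (derivative g).eval x * (derivative g).eval y :=
        fun x y h => evalSameSign _ h (fun z _ => hnz z)
      rcases (hnz 0).lt_or_gt with hneg | hpos
      · have hderneg : ∀ z : ℝ, (derivative g).eval z < 0 := by
          intro z
          rcases le_total z 0 with h | h
          · nlinarith [samed z 0 h]
          · nlinarith [samed 0 z h]
        obtain ⟨t, ht1, ht2⟩ :=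
          ((hT.eventually_gt_atTop (g.eval 0)).and (Filter.eventually_gt_atTop 0)).exists
        have hanti := strictAntiOn_eval g (x := 0) (y := t) (fun z _ => hderneg z)
        have h2 := hanti ⟨le_rfl, ht2.le⟩ ⟨ht2.le, le_rfl⟩ ht2
        simp only at h2
        linarith
      · have hderpos : ∀ z : ℝ, 0 < (derivative g).eval z := by
          intro z
          rcases le_total z 0 with h | h
          · nlinarith [samed z 0 h]
          · nlinarith [samed 0 z h]
        obtain ⟨t, ht1, ht2⟩ :=
          ((hTB.eventually_gt_atTop (|g.eval 0|)).and (Filter.eventually_gt_atTop 0)).exists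
        have hmono := strictMonoOn_eval g (x := -t) (y := 0) (fun z _ => hderpos z)
        have h2 := hmono ⟨le_rfl, by linarith⟩ ⟨by linarith, le_rfl⟩ (by linarith)
        simp only at h2
        have p1 := hgpos (-t)
        have p0 := hgpos 0
        rw [abs_of_pos p0, abs_of_pos p1] at ht1
        linarith
    have hn1 : n₁ = 1 := by omega
    rw [hn1]
    simp
  -- main case : r = r' + 1
  obtain ⟨r', rfl⟩ : ∃ r', r = r' + 1 := ⟨r - 1, by omega⟩
  set cl := c ⟨r', by omega⟩ with hcl
  set c0 := c ⟨0, by omega⟩ with hc0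
  -- choose a point x₁ to the right of everything
  obtain ⟨x₁, hx₁a, hx₁b⟩ := ((hT.eventually_gt_atTop (max (g.eval cl) 0)).and
      (Filter.eventually_gt_atTop ((insert cl (Finset.univ.image a)).max'
        (Finset.insert_nonempty _ _)))).exists
  have hgx₁pos : 0 < g.eval x₁ := lt_of_le_of_lt (le_max_right _ _) hx₁a
  have hgx₁gt : g.eval cl < g.eval x₁ := lt_of_le_of_lt (le_max_left _ _) hx₁a
  have hclx₁ : cl < x₁ := lt_of_le_of_lt
    (Finset.le_max' _ _ (Finset.mem_insert_self _ _)) hx₁b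
  have hax₁ : ∀ j : Fin n₁, a j < x₁ := fun j => lt_of_le_of_lt
    (Finset.le_max' _ _ (Finset.mem_insert_of_mem (Finset.mem_image_of_mem a (Finset.mem_univ j))))
    hx₁b
  -- choose a point x₀ to the left of everything
  obtain ⟨t, ht1, ht2⟩ := ((hTB.eventually_gt_atTop |g.eval c0|).and
      (Filter.eventually_gt_atTop (-((insert c0 (Finset.univ.image a)).min'
        (Finset.insert_nonempty _ _))))).exists
  set x₀ := -t with hx₀def
  have habs : |g.eval c0| < |g.eval x₀| := ht1
  have hx₀lt : x₀ < c0 := by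
    have := Finset.min'_le (insert c0 (Finset.univ.image a)) c0 (Finset.mem_insert_self _ _)
    simp only [hx₀def]
    linarith
  have hax₀ : ∀ j : Fin n₁, x₀ < a j := by
    intro j
    have := Finset.min'_le (insert c0 (Finset.univ.image a)) (a j)
      (Finset.mem_insert_of_mem (Finset.mem_image_of_mem a (Finset.mem_univ j)))
    simp only [hx₀def]
    linarith
  -- the sign of g'' at the last critical point is positive
  have hlastpos : 0 < (derivative (derivative g)).eval cl := by
    rcases (hg2ne ⟨r', by omega⟩).lt_or_gt with hneg | hpos
    · exfalso
      have hder : ∀ z ∈ Set.Ioo cl x₁, (derivative g).eval z < 0 := by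
        intro z hz
        have := keyR ⟨r', by omega⟩ z hz.1
          (fun j => Or.inl (hc.monotone (by simp [Fin.le_def]; omega)))
        nlinarith
      have := (strictAntiOn_eval g hder) ⟨le_rfl, hclx₁.le⟩ ⟨hclx₁.le, le_rfl⟩ hclx₁
      simp only at this
      linarith
    · exact hpos
  -- sign relation at the left end
  have hw0 : 0 < g.eval x₀ * (derivative (derivative g)).eval c0 := by
    have hLz : ∀ z : ℝ, z < c0 →
        (derivative g).eval z * (derivative (derivative g)).eval c0 < 0 := fun z hz =>
      keyL ⟨0, by omega⟩ z hz (fun j => Or.inl (hc.monotone (Fin.zero_le j)))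
    rcases (hg2ne ⟨0, by omega⟩).lt_or_gt with hneg | hpos
    · have hder : ∀ z ∈ Set.Ioo x₀ c0, 0 < (derivative g).eval z := by
        intro z hz
        nlinarith [hLz z hz.2]
      have hlt := (strictMonoOn_eval g hder) ⟨le_rfl, hx₀lt.le⟩ ⟨hx₀lt.le, le_rfl⟩ hx₀lt
      simp only at hlt
      have hx0neg : g.eval x₀ < 0 := by
        by_contra hge
        push_neg at hge
        rw [abs_of_pos (lt_of_le_of_lt hge hlt), abs_of_nonneg hge] at habs
        linarith
      exact mul_pos_of_neg_of_neg hx0neg hneg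
    · have hder : ∀ z ∈ Set.Ioo x₀ c0, (derivative g).eval z < 0 := by
        intro z hz
        nlinarith [hLz z hz.2]
      have hlt := (strictAntiOn_eval g hder) ⟨le_rfl, hx₀lt.le⟩ ⟨hx₀lt.le, le_rfl⟩ hx₀lt
      simp only at hlt
      have hx0pos : 0 < g.eval x₀ := by
        by_contra hge
        push_neg at hge
        rw [abs_of_neg (lt_of_lt_of_le hlt hge), abs_of_nonpos hge] at habs
        linarith
      exact mul_pos hx0pos hpos
  -- alternation of the sign of g'' at consecutive critical points
  have halt : ∀ k : ℕ, ∀ hk : k + 1 < r' + 1,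
      (derivative (derivative g)).eval (c ⟨k, by omega⟩) *
        (derivative (derivative g)).eval (c ⟨k+1, hk⟩) < 0 := by
    intro k hk
    set u := c ⟨k, by omega⟩ with hu
    set v := c ⟨k+1, hk⟩ with hv
    have huv : u < v := hc (by simp [Fin.lt_def])
    set m := (u+v)/2 with hmdef
    have hm1 : u < m := by rw [hmdef]; linarith
    have hm2 : m < v := by rw [hmdef]; linarith
    have hnom : ∀ j : Fin (r'+1), c j ≤ u ∨ m < c j := by
      intro j
      rcases le_or_gt (j : ℕ) k with h | h
      · exact Or.inl (hc.monotone (by simp [Fin.le_def]; omega))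
      · exact Or.inr (lt_of_lt_of_le hm2 (hc.monotone (by simp [Fin.le_def]; omega)))
    have hnom2 : ∀ j : Fin (r'+1), v ≤ c j ∨ c j < m := by
      intro j
      rcases le_or_gt (j : ℕ) k with h | h
      · exact Or.inr (lt_of_le_of_lt (hc.monotone (by simp [Fin.le_def]; omega)) hm1)
      · exact Or.inl (hc.monotone (by simp [Fin.le_def]; omega))
    have h1 := keyR ⟨k, by omega⟩ m hm1 hnom
    have h2 := keyL ⟨k+1, hk⟩ m hm2 hnom2
    rw [← hu] at h1
    rw [← hv] at h2
    nlinarith [h1, h2, sq_nonneg ((derivative g).eval m)]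
  -- adjacent critical points cannot both have positive g''·g
  have hWadj : ∀ k : ℕ, ∀ hk : k + 1 < r' + 1,
      ¬ (0 < (derivative (derivative g)).eval (c ⟨k, by omega⟩) * g.eval (c ⟨k, by omega⟩) ∧
         0 < (derivative (derivative g)).eval (c ⟨k+1, hk⟩) * g.eval (c ⟨k+1, hk⟩)) := by
    rintro k hk ⟨h1, h2⟩
    set u := c ⟨k, by omega⟩ with hu
    set v := c ⟨k+1, hk⟩ with hv
    have huv : u < v := hc (by simp [Fin.lt_def])
    have hsgn : ∀ z ∈ Set.Ioo u v,
        0 < (derivative g).eval z * (derivative (derivative g)).eval u := by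
      intro z hz
      apply keyR ⟨k, by omega⟩ z hz.1
      intro j
      rcases le_or_gt (j : ℕ) k with h | h
      · exact Or.inl (hc.monotone (by simp [Fin.le_def]; omega))
      · exact Or.inr (lt_of_lt_of_le hz.2 (hc.monotone (by simp [Fin.le_def]; omega)))
    have haltk := halt k hk
    rw [← hu, ← hv] at haltk
    rcases (hg2ne ⟨k, by omega⟩).lt_or_gt with hneg | hpos
    · rw [← hu] at hneg
      have hder : ∀ z ∈ Set.Ioo u v, (derivative g).eval z < 0 := by
        intro z hz
        nlinarith [hsgn z hz]
      have hlt := (strictAntiOn_eval g hder) ⟨le_rfl, huv.le⟩ ⟨huv.le, le_rfl⟩ huv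
      simp only at hlt
      have hgu : g.eval u < 0 := by by_contra hcon; push_neg at hcon; nlinarith
      have hg2v : 0 < (derivative (derivative g)).eval v := by
        by_contra hcon; push_neg at hcon; nlinarith [haltk]
      have hgv : 0 < g.eval v := by by_contra hcon; push_neg at hcon; nlinarith [h2]
      linarith
    · rw [← hu] at hpos
      have hder : ∀ z ∈ Set.Ioo u v, 0 < (derivative g).eval z := by
        intro z hz
        nlinarith [hsgn z hz]
      have hlt := (strictMonoOn_eval g hder) ⟨le_rfl, huv.le⟩ ⟨huv.le, le_rfl⟩ huv
      simp only at hlt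
      have hgu : 0 < g.eval u := by by_contra hcon; push_neg at hcon; nlinarith
      have hg2v : (derivative (derivative g)).eval v < 0 := by
        by_contra hcon; push_neg at hcon; nlinarith [haltk]
      have hgv : g.eval v < 0 := by by_contra hcon; push_neg at hcon; nlinarith [h2]
      linarith
  -- the subdivision points
  set d : ℕ → ℝ := fun k =>
    if k = 0 then x₀ else if h : k ≤ r' + 1 then c ⟨k - 1, by omega⟩
      else x₁ + ((k - (r'+2) : ℕ) : ℝ) with hd
  have hd0 : d 0 = x₀ := by simp [hd]
  have hdc : ∀ (k : ℕ) (hk : k < r' + 1), d (k+1) = c ⟨k, hk⟩ := by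
    intro k hk
    simp only [hd]
    rw [if_neg (by omega), dif_pos (by omega)]
    exact congrArg c (Fin.ext (by simp))
  have hdlast : d (r' + 2) = x₁ := by
    simp only [hd]
    rw [if_neg (by omega), dif_neg (by omega)]
    simp
  have hdmono : StrictMono d := by
    apply strictMono_nat_of_lt_succ
    intro k
    rcases Nat.eq_zero_or_pos k with rfl | hkpos
    · rw [hd0, hdc 0 (by omega)]
      exact hx₀lt
    rcases lt_or_ge k (r'+1) with hk | hk
    · obtain ⟨k', rfl⟩ : ∃ k', k = k'+1 := ⟨k-1, by omega⟩
      rw [hdc k' (by omega), hdc (k'+1) hk]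
      exact hc (by simp [Fin.lt_def])
    · rcases Nat.eq_or_lt_of_le hk with he | hlt2
      · have hk' : k = r' + 1 := he.symm
        subst hk'
        rw [hdc r' (by omega), hdlast]
        exact hclx₁
      · have e1 : d k = x₁ + ((k - (r'+2) : ℕ) : ℝ) := by
          simp only [hd]; rw [if_neg (by omega), dif_neg (by omega)]
        have e2 : d (k+1) = x₁ + ((k+1 - (r'+2) : ℕ) : ℝ) := by
          simp only [hd]; rw [if_neg (by omega), dif_neg (by omega)]
        rw [e1, e2]
        have hlt3 : ((k - (r'+2) : ℕ) : ℝ) < ((k+1 - (r'+2) : ℕ) : ℝ) :=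
          Nat.cast_lt.mpr (by omega)
        linarith
  -- no critical points inside the subdivision intervals
  have hIooNoCrit : ∀ (k : ℕ), k ≤ r'+1 → ∀ z ∈ Set.Ioo (d k) (d (k+1)),
      (derivative g).eval z ≠ 0 := by
    intro k hk z hz h0
    obtain ⟨i, hi⟩ := (hcrit z).mp h0
    have hdi : d (i.val + 1) = c i := by
      rw [hdc i.val i.isLt]
    have h1 : d k < d (i.val + 1) := by rw [hdi, hi]; exact hz.1
    have h2 : d (i.val + 1) < d (k+1) := by rw [hdi, hi]; exact hz.2
    have := hdmono.lt_iff_lt.mp h1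
    have := hdmono.lt_iff_lt.mp h2
    omega
  -- counting roots interval by interval
  have hcount : ∀ (k : ℕ), k ≤ r'+1 →
      ((Finset.univ : Finset (Fin n₁)).filter (fun j => a j ∈ Set.Ioo (d k) (d (k+1)))).card
        = if g.eval (d k) * g.eval (d (k+1)) < 0 then 1 else 0 :=
    fun k hk => count_Ioo g a ha hroots (hdmono (lt_add_one k)) (hIooNoCrit k hk)
  have hsplit : ∀ m : ℕ, m ≤ r' + 2 →
      ((Finset.univ : Finset (Fin n₁)).filter (fun j => a j ∈ Set.Ioo x₀ (d m))).card
        = ∑ k ∈ Finset.range m, ((Finset.univ : Finset (Fin n₁)).filter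
            (fun j => a j ∈ Set.Ioo (d k) (d (k+1)))).card := by
    intro m
    induction m with
    | zero =>
      intro _
      rw [Finset.range_zero, Finset.sum_empty, ← hd0]
      simp [Set.Ioo_self]
    | succ m ih =>
      intro hm
      rw [Finset.sum_range_succ, ← ih (by omega)]
      have hne : ∀ j : Fin n₁, a j ≠ d m := by
        intro j
        rcases Nat.eq_zero_or_pos m with rfl | hmpos
        · rw [hd0]; exact (hax₀ j).ne'
        · obtain ⟨m', rfl⟩ : ∃ m', m = m'+1 := ⟨m-1, by omega⟩
          rw [hdc m' (by omega)]
          intro he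
          exact hgcne _ (by rw [← he]; exact (hroots _).mpr ⟨j, rfl⟩)
      have hx0dm : x₀ ≤ d m := by
        rw [← hd0]
        exact hdmono.monotone (Nat.zero_le m)
      have hdisj : Disjoint
          ((Finset.univ : Finset (Fin n₁)).filter (fun j => a j ∈ Set.Ioo x₀ (d m)))
          ((Finset.univ : Finset (Fin n₁)).filter (fun j => a j ∈ Set.Ioo (d m) (d (m+1)))) := by
        rw [Finset.disjoint_left]
        intro j hj1 hj2
        simp only [Finset.mem_filter, Set.mem_Ioo] at hj1 hj2
        linarith [hj1.2.2, hj2.2.1]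
      have heq : ((Finset.univ : Finset (Fin n₁)).filter (fun j => a j ∈ Set.Ioo x₀ (d (m+1))))
          = ((Finset.univ : Finset (Fin n₁)).filter (fun j => a j ∈ Set.Ioo x₀ (d m)))
            ∪ ((Finset.univ : Finset (Fin n₁)).filter
                (fun j => a j ∈ Set.Ioo (d m) (d (m+1)))) := by
        ext j
        simp only [Finset.mem_union, Finset.mem_filter, Finset.mem_univ, true_and, Set.mem_Ioo]
        have h1 := hne j
        have h2 := hdmono (lt_add_one m)
        constructor
        · rintro ⟨hj1, hj2⟩
          rcases lt_or_gt_of_ne h1 with h | h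
          · exact Or.inl ⟨hj1, h⟩
          · exact Or.inr ⟨h, hj2⟩
        · rintro (⟨hj1, hj2⟩ | ⟨hj1, hj2⟩)
          · exact ⟨hj1, hj2.trans h2⟩
          · exact ⟨lt_of_le_of_lt hx0dm hj1, hj2⟩
      rw [heq, Finset.card_union_of_disjoint hdisj]
  have htotal : ((Finset.univ : Finset (Fin n₁)).filter
      (fun j => a j ∈ Set.Ioo x₀ (d (r'+2)))).card = n₁ := by
    rw [Finset.filter_true_of_mem, Finset.card_univ, Fintype.card_fin]
    intro j _
    rw [hdlast]
    exact ⟨hax₀ j, hax₁ j⟩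
  have hcountN : n₁ = ∑ k ∈ Finset.range (r'+2),
      (if g.eval (d k) * g.eval (d (k+1)) < 0 then 1 else 0) := by
    rw [← htotal, hsplit (r'+2) le_rfl]
    exact Finset.sum_congr rfl (fun k hk => hcount k (by
      have := Finset.mem_range.mp hk; omega))
  -- the sign sequence
  set W : ℕ → ℝ := fun k =>
    (derivative (derivative g)).eval (c ⟨min k r', by omega⟩) *
      g.eval (c ⟨min k r', by omega⟩) with hW
  have hWk : ∀ (k : ℕ) (hk : k < r' + 1), W k =
      (derivative (derivative g)).eval (c ⟨k, hk⟩) * g.eval (c ⟨k, hk⟩) := by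
    intro k hk
    have e : (⟨min k r', by omega⟩ : Fin (r'+1)) = ⟨k, hk⟩ := Fin.ext (by simp; omega)
    rw [hW]
    simp only
    rw [e]
  have hcomb := comb r' W
    (fun k _ => mul_ne_zero (hg2ne _) (hgcne _))
    (by
      intro k hk
      rw [hWk k (by omega), hWk (k+1) (by omega)]
      exact hWadj k (by omega))
  -- identify the interval terms with the W-terms
  have T0 : (if g.eval (d 0) * g.eval (d 1) < 0 then (1:ℤ) else 0)
      = (if W 0 < 0 then (1:ℤ) else 0) := by
    rw [hd0, hdc 0 (by omega), hWk 0 (by omega)]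
    have hiff : g.eval x₀ * g.eval (c ⟨0, by omega⟩) < 0 ↔
        (derivative (derivative g)).eval (c ⟨0, by omega⟩) * g.eval (c ⟨0, by omega⟩) < 0 := by
      rw [← hc0]
      constructor
      · intro h
        exact mul_sign_neg_of (A := g.eval x₀) hw0 h
      · intro h
        exact mul_sign_neg_of (A := (derivative (derivative g)).eval c0)
          (by linarith [mul_comm (g.eval x₀) ((derivative (derivative g)).eval c0), hw0]) h
    exact if_congr hiff rfl rfl
  have Tmid : ∀ k ∈ Finset.range r',
      (if g.eval (d (k+1)) * g.eval (d (k+1+1)) < 0 then (1:ℤ) else 0)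
      = (if 0 < W k * W (k+1) then (1:ℤ) else 0) := by
    intro k hk
    have hkr := Finset.mem_range.mp hk
    rw [hdc k (by omega), hdc (k+1) (by omega), hWk k (by omega), hWk (k+1) (by omega)]
    have haltk := halt k (by omega)
    have h2u := hg2ne ⟨k, by omega⟩
    have h2v := hg2ne ⟨k+1, by omega⟩
    have hgu := hgcne ⟨k, by omega⟩
    have hgv := hgcne ⟨k+1, by omega⟩
    have hiff : g.eval (c ⟨k, by omega⟩) * g.eval (c ⟨k+1, by omega⟩) < 0 ↔
        0 < ((derivative (derivative g)).eval (c ⟨k, by omega⟩) * g.eval (c ⟨k, by omega⟩)) *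
          ((derivative (derivative g)).eval (c ⟨k+1, by omega⟩) * g.eval (c ⟨k+1, by omega⟩)) := by
      constructor
      · intro h
        nlinarith [mul_pos_of_neg_of_neg h haltk]
      · intro h
        by_contra hcon
        push_neg at hcon
        nlinarith [h, mul_nonpos_of_nonneg_of_nonpos hcon haltk.le]
    exact if_congr hiff rfl rfl
  have Tlast : (if g.eval (d (r'+1)) * g.eval (d (r'+2)) < 0 then (1:ℤ) else 0)
      = (if W r' < 0 then (1:ℤ) else 0) := by
    rw [hdc r' (by omega), hdlast, hWk r' (by omega)]
    have hiff : g.eval (c ⟨r', by omega⟩) * g.eval x₁ < 0 ↔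
        (derivative (derivative g)).eval (c ⟨r', by omega⟩) * g.eval (c ⟨r', by omega⟩) < 0 := by
      rw [← hcl]
      constructor
      · intro h
        have hclneg : g.eval cl < 0 := by nlinarith [hgx₁pos]
        exact mul_neg_of_pos_of_neg hlastpos hclneg
      · intro h
        have hclneg : g.eval cl < 0 := by nlinarith [hlastpos]
        exact mul_neg_of_neg_of_pos hclneg hgx₁pos
    exact if_congr hiff rfl rfl
  -- cast the counting identity to ℤ and split the sum
  have hcountZ : (n₁ : ℤ) = ∑ k ∈ Finset.range (r'+2),
      (if g.eval (d k) * g.eval (d (k+1)) < 0 then (1:ℤ) else 0) := by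
    rw [hcountN]
    push_cast
    exact Finset.sum_congr rfl (fun k _ => by split <;> simp)
  rw [Finset.sum_range_succ, Finset.sum_range_succ'] at hcountZ
  rw [Finset.sum_congr rfl Tmid, T0, Tlast] at hcountZ
  -- rewrite the goal sum
  have hgoal : (∑ i : Fin (r'+1),
        if 0 < -((derivative (derivative g)).eval (c i)) / g.eval (c i) then (1:ℤ) else -1)
      = ∑ k ∈ Finset.range (r'+1), (if W k < 0 then (1:ℤ) else -1) := by
    rw [← Fin.sum_univ_eq_sum_range (fun k => if W k < 0 then (1:ℤ) else -1) (r'+1)]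
    apply Finset.sum_congr rfl
    intro i _
    have hWi : W i.val = (derivative (derivative g)).eval (c i) * g.eval (c i) := by
      rw [hWk i.val i.isLt]
    have hiff : (0 < -((derivative (derivative g)).eval (c i)) / g.eval (c i)) ↔
        W i.val < 0 := by
      rw [hWi, neg_div, neg_pos, div_neg_iff, mul_neg_iff]
    exact if_congr hiff rfl rfl
  rw [hgoal]
  linarith [hcomb, hcountZ]
end

section
/- Let λ = (λ₁,...,λ_d) be a partition of n, κ ⊂ λ with |κ| = n−2, such that λ/κ consists of two boxes at positions (i₁,j₁) and (i₂,j₂) with distance L = |i₁−i₂| + |j₁−j₂| > 1 (so both are corners of λ). Let α¹, α² be the partitions obtained from λ by deleting the corners (i₁,j₁) and (i₂,j₂) respectively. Then n·(n−1)⁻¹·(#SYT(α¹)·#SYT(α²))/(#SYT(λ)·#SYT(κ)) = 1 − L⁻². -/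
/-!
By Frobenius' formula, `#SYT(Y) · ∏ᵢ ℓᵢ! = |Y|! · Δ(ℓ)`, where `ℓᵢ = λᵢ + d - 1 - i` and `Δ` is the
Vandermonde product. It follows by induction on `|Y|` from the branching rule
`#SYT(Y) = ∑_c #SYT(Y - c)` over the corners `c` (the cell carrying the largest label is a corner)
and the identity `∑_r ℓ_r Δ(ℓ - e_r) = (∑ ℓ - C(d, 2)) Δ(ℓ)`, an instance of Lagrange interpolation
at the nodes `ℓ`. Comparing the formula for `Y` and `Y - c`, removing the corner in row `r`
multiplies `#SYT` by `w_r(ℓ) / |Y|`, where `w_r(ℓ) = ℓ_r ∏_{k ≠ r} (ℓ_r - 1 - ℓ_k) / (ℓ_r - ℓ_k)`.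
The weights for removing `(i₁, j₁)` from `λ` and from `α²` differ only in the factor `k = i₂`,
which is `(a - 1) / a` for the one and `a / (a + 1)` for the other, where `a = ℓ_{i₁} - ℓ_{i₂}` is
the difference of the contents `j - i` of the two corners, so `a = ±L`; the ratio is `1 - a⁻²`.
-/

noncomputable section

/-- The number of standard Young tableaux of shape `Y`. -/
def numSYT (Y : YoungDiagram) : ℕ :=
  Nat.card {T : Y.cells → Fin Y.card //
    Function.Bijective T ∧
    ∀ c₁ c₂ : Y.cells, c₁.1.1 ≤ c₂.1.1 → c₁.1.2 ≤ c₂.1.2 → c₁ ≠ c₂ → T c₁ < T c₂}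

open Finset
open scoped Nat

section NaturalLabeling

variable {α : Type*} [PartialOrder α]

/-- `n` is a parameter rather than `#s`, so that removing an element needs no cast; the type is
empty unless `n = #s`. -/
abbrev NaturalLabeling (s : Finset α) (n : ℕ) : Type _ :=
  {T : s → Fin n // Function.Bijective T ∧ StrictMono T}

namespace NaturalLabeling

variable {s : Finset α} {c : α} {n : ℕ}

def top (T : NaturalLabeling s (n + 1)) : α :=
  ((Equiv.ofBijective T.1 T.2.1).symm (Fin.last n)).1

lemma apply_eq_last_iff (T : NaturalLabeling s (n + 1)) (hc : c ∈ s) :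
    T.1 ⟨c, hc⟩ = Fin.last n ↔ T.top = c := by
  have : (Equiv.ofBijective T.1 T.2.1).symm (Fin.last n) = ⟨c, hc⟩ ↔ T.1 ⟨c, hc⟩ = Fin.last n := by
    rw [Equiv.symm_apply_eq, eq_comm]; rfl
  rw [top, ← this, Subtype.ext_iff]

lemma maximal_top (T : NaturalLabeling s (n + 1)) : Maximal (· ∈ s) T.top := by
  set x := (Equiv.ofBijective T.1 T.2.1).symm (Fin.last n)
  have hx : T.1 x = Fin.last n := (Equiv.ofBijective T.1 T.2.1).apply_symm_apply _
  refine maximal_iff_forall_gt.2 ⟨x.2, fun b hlt hb => ?_⟩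
  have := T.2.2 (show x < ⟨b, hb⟩ from hlt)
  exact (Fin.le_last _).not_gt (hx ▸ this)

variable [DecidableEq α]

def eraseTop (T : NaturalLabeling s (n + 1)) (hc : c ∈ s) (hTc : T.1 ⟨c, hc⟩ = Fin.last n) :
    NaturalLabeling (s.erase c) n := by
  have hne (x : s.erase c) : T.1 ⟨x, mem_of_mem_erase x.2⟩ ≠ Fin.last n := fun h =>
    ne_of_mem_erase x.2 (congrArg Subtype.val (T.2.1.1 (h.trans hTc.symm)))
  refine ⟨fun x => (T.1 ⟨x, mem_of_mem_erase x.2⟩).castPred (hne x), ⟨fun x y hxy => ?_,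
    fun k => ?_⟩, fun x y hxy => ?_⟩
  · exact Subtype.ext (congrArg Subtype.val (T.2.1.1 (Fin.castPred_inj.1 hxy)) :)
  · obtain ⟨x, hx⟩ := T.2.1.2 k.castSucc
    have hxc : x.1 ≠ c := fun h => Fin.castSucc_ne_last k (hx ▸ hTc ▸ by subst h; rfl)
    exact ⟨⟨x, mem_erase.2 ⟨hxc, x.2⟩⟩, by simp [hx]⟩
  · exact Fin.castPred_lt_castPred_iff.2 (T.2.2 (show (⟨x, _⟩ : s) < ⟨y, _⟩ from hxy))

def insertTop (T : NaturalLabeling (s.erase c) n) (hc : Maximal (· ∈ s) c) :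
    NaturalLabeling s (n + 1) := by
  refine ⟨fun x => if h : x.1 = c then Fin.last n else (T.1 ⟨x, mem_erase.2 ⟨h, x.2⟩⟩).castSucc,
    ⟨fun x y hxy => ?_, fun k => ?_⟩, fun x y hxy => ?_⟩
  · by_cases hx : x.1 = c <;> by_cases hy : y.1 = c <;>
      simp only [hx, hy, dite_true, dite_false] at hxy
    · exact Subtype.ext (hx.trans hy.symm)
    · exact absurd hxy.symm (Fin.castSucc_ne_last _)
    · exact absurd hxy (Fin.castSucc_ne_last _)
    · exact Subtype.ext (congrArg Subtype.val (T.2.1.1 (Fin.castSucc_injective _ hxy)) :)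
  · induction k using Fin.lastCases with
    | last => exact ⟨⟨c, hc.1⟩, dif_pos rfl⟩
    | cast k =>
      obtain ⟨x, hx⟩ := T.2.1.2 k
      exact ⟨⟨x, mem_of_mem_erase x.2⟩, by simp [ne_of_mem_erase x.2, hx]⟩
  · by_cases hy : y.1 = c
    · have hx : x.1 ≠ c := fun hx => hxy.ne (Subtype.ext (hx.trans hy.symm))
      simp [hx, hy]
    · have hx : x.1 ≠ c := fun hx => hc.not_gt y.2 (hx ▸ hxy)
      simpa [hx, hy] using T.2.2 (show (⟨x, _⟩ : s.erase c) < ⟨y, _⟩ from hxy)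

lemma insertTop_apply_self (T : NaturalLabeling (s.erase c) n) (hc : Maximal (· ∈ s) c) :
    (T.insertTop hc).1 ⟨c, hc.1⟩ = Fin.last n :=
  dif_pos rfl

def equivEraseTop (hc : Maximal (· ∈ s) c) :
    {T : NaturalLabeling s (n + 1) // T.1 ⟨c, hc.1⟩ = Fin.last n} ≃ NaturalLabeling (s.erase c) n
    where
  toFun T := T.1.eraseTop hc.1 T.2
  invFun T := ⟨T.insertTop hc, insertTop_apply_self T hc⟩
  left_inv T := by
    refine Subtype.ext (Subtype.ext (funext fun x => ?_))
    by_cases hx : x.1 = c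
    · obtain rfl : x = ⟨c, hc.1⟩ := Subtype.ext hx
      exact (insertTop_apply_self _ hc).trans T.2.symm
    · simp [insertTop, eraseTop, hx]
  right_inv T := Subtype.ext (funext fun x => by simp [insertTop, eraseTop, ne_of_mem_erase x.2])

end NaturalLabeling

variable [DecidableEq α]

open scoped Classical in
theorem card_naturalLabeling_succ (s : Finset α) (n : ℕ) :
    Nat.card (NaturalLabeling s (n + 1)) =
      ∑ c ∈ s with Maximal (· ∈ s) c, Nat.card (NaturalLabeling (s.erase c) n) := by
  have := Fintype.ofFinite (NaturalLabeling s (n + 1))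
  rw [Nat.card_eq_fintype_card, ← card_univ,
    card_eq_sum_card_fiberwise (f := NaturalLabeling.top) (t := {c ∈ s | Maximal (· ∈ s) c})
      fun T _ => mem_filter.2 ⟨T.maximal_top.1, T.maximal_top⟩]
  refine sum_congr rfl fun c hc => ?_
  have hc : Maximal (· ∈ s) c := (mem_filter.1 hc).2
  rw [← Fintype.card_subtype, ← Nat.card_eq_fintype_card,
    ← Nat.card_congr (NaturalLabeling.equivEraseTop hc)]
  exact Nat.card_congr (Equiv.subtypeEquivRight fun T => (T.apply_eq_last_iff hc.1).symm)

end NaturalLabeling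

section ShiftIdentity

open Polynomial Lagrange

variable {F : Type*} [Field F] {ι : Type*}

/-- The shift by `#s` makes the coefficients of `X ^ #s` cancel, so the degree is `< #s`; at a
node only the first term survives. -/
def shiftDefect (s : Finset ι) (x : ι → F) : F[X] :=
  X * nodal s (fun i => x i + 1) - (X - (#s : F[X])) * nodal s x

lemma shiftDefect_singleton (a : ι) (x : ι → F) : shiftDefect {a} x = C (-x a) := by
  simp only [shiftDefect, nodal, prod_singleton, card_singleton, Nat.cast_one, map_add, map_neg,
    map_one]
  ring

variable [DecidableEq ι]

lemma shiftDefect_cons {a : ι} {s : Finset ι} (h : a ∉ s) (x : ι → F) :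
    shiftDefect (cons a s h) x =
      shiftDefect s x * (X - C (x a + 1)) + C ((#s : F) - x a) * nodal s x := by
  simp only [shiftDefect, cons_eq_insert, nodal_insert_eq_nodal h, card_insert_of_notMem h,
    map_sub, map_natCast, map_add, map_one]
  push_cast
  ring

lemma shiftDefect_coeff {s : Finset ι} (hs : s.Nonempty) (x : ι → F) :
    (∀ k, #s ≤ k → (shiftDefect s x).coeff k = 0) ∧
      (shiftDefect s x).coeff (#s - 1) = ((#s).choose 2 : F) - ∑ i ∈ s, x i := by
  induction hs using Finset.Nonempty.cons_induction with
  | singleton a =>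
    refine ⟨fun k hk => ?_, ?_⟩ <;> simp_all [shiftDefect_singleton, coeff_C]
    omega
  | cons a s h hs ih =>
    have hN : (nodal s x).natDegree = #s := natDegree_nodal
    have hN_lead : (nodal s x).coeff #s = 1 := hN ▸ nodal_monic.coeff_natDegree
    have hpos : 0 < #s := hs.card_pos
    rw [shiftDefect_cons, card_cons]
    refine ⟨fun k hk => ?_, ?_⟩
    · obtain ⟨j, rfl⟩ := Nat.exists_eq_add_of_le' (by omega : 1 ≤ k)
      rw [coeff_add, coeff_mul_X_sub_C, coeff_C_mul, ih.1 j (by omega), ih.1 (j + 1) (by omega),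
        coeff_eq_zero_of_natDegree_lt (by omega)]
      ring
    · obtain ⟨m, hm⟩ := Nat.exists_eq_add_of_le' hpos
      rw [Nat.add_sub_cancel, coeff_add, hm, coeff_mul_X_sub_C, coeff_C_mul, ← hm, hN_lead,
        ih.1 #s le_rfl, sum_cons, show m = #s - 1 by omega, ih.2, Nat.choose_succ_succ',
        Nat.choose_one_right]
      push_cast
      ring

theorem sum_mul_prod_sub_one_div_prod_sub {s : Finset ι} {x : ι → F} (hx : Set.InjOn x s) :
    ∑ r ∈ s, x r * (∏ k ∈ s.erase r, (x r - 1 - x k)) / ∏ k ∈ s.erase r, (x r - x k) =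
      ∑ r ∈ s, x r - (#s).choose 2 := by
  rcases s.eq_empty_or_nonempty with rfl | hs
  · simp
  obtain ⟨hdeg, hcoeff⟩ := shiftDefect_coeff hs x
  have heval (r) (hr : r ∈ s) : (shiftDefect s x).eval (x r) =
      -(x r * ∏ k ∈ s.erase r, (x r - 1 - x k)) := by
    rw [shiftDefect, eval_sub, eval_mul, eval_mul, eval_X, eval_nodal_at_node hr, eval_nodal,
      ← mul_prod_erase s _ hr]
    simp only [mul_zero, sub_zero]
    rw [show x r - (x r + 1) = -1 by ring, prod_congr rfl fun k _ => show
      x r - (x k + 1) = x r - 1 - x k by ring]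
    ring
  rw [coeff_eq_sum hx (degree_lt_iff_coeff_zero _ _ |>.2 fun k hk => hdeg k (by exact_mod_cast hk)),
    sum_congr rfl fun r hr => by rw [heval r hr, neg_div], sum_neg_distrib] at hcoeff
  linear_combination -hcoeff

end ShiftIdentity

section Vandermonde

variable {R : Type*} [CommRing R] {d r : ℕ}

def vandermondeProd (d : ℕ) (x : ℕ → R) : R :=
  ∏ i ∈ range d, ∏ j ∈ Ioo i d, (x i - x j)

lemma vandermondeProd_eq_mul (hr : r < d) (x : ℕ → R) :
    vandermondeProd d x =
      (∏ i ∈ (range d).erase r, ∏ j ∈ (Ioo i d).erase r, (x i - x j)) *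
        ((-1) ^ r * ∏ k ∈ (range d).erase r, (x r - x k)) := by
  have hsplit (i) (hi : i ∈ (range d).erase r) : ∏ j ∈ Ioo i d, (x i - x j) =
      (if i < r then x i - x r else 1) * ∏ j ∈ (Ioo i d).erase r, (x i - x j) := by
    split_ifs with hir
    · exact (mul_prod_erase _ (fun j => x i - x j) (mem_Ioo.2 ⟨hir, hr⟩)).symm
    · rw [one_mul, erase_eq_of_notMem (by simp; omega)]
  have hlow : ∏ i ∈ (range d).erase r, (if i < r then x i - x r else 1) =
      (-1) ^ r * ∏ k ∈ range r, (x r - x k) := by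
    rw [← prod_filter, show {i ∈ (range d).erase r | i < r} = range r by ext; simp; omega,
      show ((-1 : R) ^ r) = ∏ _k ∈ range r, (-1) by simp, ← prod_mul_distrib]
    exact prod_congr rfl fun _ _ => by ring
  have hrest : ∏ k ∈ (range d).erase r, (x r - x k) =
      (∏ k ∈ range r, (x r - x k)) * ∏ k ∈ Ioo r d, (x r - x k) := by
    rw [← prod_union (disjoint_left.2 fun k hk hk' => by simp at hk hk'; omega)]
    congr 1; ext; simp; omega
  rw [vandermondeProd, ← mul_prod_erase _ _ (mem_range.2 hr), prod_congr rfl hsplit,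
    prod_mul_distrib, hlow, hrest]
  ring

lemma vandermondeProd_sub_single_mul (hr : r < d) (x : ℕ → R) :
    vandermondeProd d (x - Pi.single r 1) * ∏ k ∈ (range d).erase r, (x r - x k) =
      vandermondeProd d x * ∏ k ∈ (range d).erase r, (x r - 1 - x k) := by
  have hoff (k) (hk : k ≠ r) : (x - Pi.single r 1 : ℕ → R) k = x k := by simp [hk]
  rw [vandermondeProd_eq_mul hr, vandermondeProd_eq_mul hr x]
  have hW : ∏ i ∈ (range d).erase r, ∏ j ∈ (Ioo i d).erase r,
      ((x - Pi.single r 1 : ℕ → R) i - (x - Pi.single r 1 : ℕ → R) j) =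
        ∏ i ∈ (range d).erase r, ∏ j ∈ (Ioo i d).erase r, (x i - x j) :=
    prod_congr rfl fun i hi => prod_congr rfl fun j hj => by
      rw [hoff i (ne_of_mem_erase hi), hoff j (ne_of_mem_erase hj)]
  have hP : ∏ k ∈ (range d).erase r,
      ((x - Pi.single r 1 : ℕ → R) r - (x - Pi.single r 1 : ℕ → R) k) =
      ∏ k ∈ (range d).erase r, (x r - 1 - x k) :=
    prod_congr rfl fun k hk => by simp [hoff k (ne_of_mem_erase hk)]
  rw [hW, hP]
  ring

lemma vandermondeProd_eq_zero {x : ℕ → R} {i j : ℕ} (hij : i < j) (hj : j < d) (h : x i = x j) :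
    vandermondeProd d x = 0 :=
  prod_eq_zero (mem_range.2 (hij.trans hj)) <|
    prod_eq_zero (mem_Ioo.2 ⟨hij, hj⟩) (sub_eq_zero.2 h)

lemma vandermondeProd_ne_zero [IsDomain R] {x : ℕ → R} (hx : Set.InjOn x (range d)) :
    vandermondeProd d x ≠ 0 :=
  prod_ne_zero_iff.2 fun _ hi => prod_ne_zero_iff.2 fun _ hj => sub_ne_zero.2 fun h =>
    (mem_Ioo.1 hj).1.ne (hx hi (mem_range.2 (mem_Ioo.1 hj).2) h)

lemma vandermondeProd_range_reverse (d : ℕ) :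
    vandermondeProd d (fun i => ((d - 1 - i : ℕ) : R)) = ∏ i ∈ range d, ((d - 1 - i)! : R) := by
  refine prod_congr rfl fun i hi => ?_
  have hi := mem_range.1 hi
  rw [← Ico_add_one_left_eq_Ioo, prod_Ico_eq_prod_range, show d - (i + 1) = d - 1 - i by omega,
    ← prod_range_add_one_eq_factorial, Nat.cast_prod]
  refine prod_congr rfl fun k hk => ?_
  have hk := mem_range.1 hk
  rw [← Nat.cast_sub (by omega)]
  congr 1
  omega

lemma prod_erase_sub_ne_zero {S ι : Type*} [CommRing S] [IsDomain S] [DecidableEq ι]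
    {s : Finset ι} {x : ι → S} (hx : Set.InjOn x s) {r : ι} (hr : r ∈ s) :
    ∏ k ∈ s.erase r, (x r - x k) ≠ 0 :=
  prod_ne_zero_iff.2 fun _ hk => sub_ne_zero.2 fun h =>
    ne_of_mem_erase hk (hx (mem_of_mem_erase hk) hr h.symm)

theorem sum_mul_vandermondeProd_sub_single {F : Type*} [Field F] {x : ℕ → F}
    (hx : Set.InjOn x (range d)) :
    ∑ r ∈ range d, x r * vandermondeProd d (x - Pi.single r 1) =
      (∑ r ∈ range d, x r - d.choose 2) * vandermondeProd d x := by
  have key := sum_mul_prod_sub_one_div_prod_sub hx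
  rw [card_range] at key
  rw [← key, sum_mul]
  refine sum_congr rfl fun r hr => ?_
  rw [div_mul_eq_mul_div, eq_div_iff (prod_erase_sub_ne_zero hx hr), mul_assoc,
    vandermondeProd_sub_single_mul (mem_range.1 hr)]
  ring

def cornerWeight {F : Type*} [Field F] (d r : ℕ) (x : ℕ → F) : F :=
  x r * ∏ k ∈ (range d).erase r, (x r - 1 - x k) / (x r - x k)

lemma cornerWeight_sub_single_mul {F : Type*} [Field F] {x : ℕ → F} {r₁ r₂ : ℕ}
    (hr₂ : r₂ ∈ (range d).erase r₁) (ha₀ : x r₁ - x r₂ ≠ 0) (ha₁ : x r₁ - x r₂ + 1 ≠ 0) :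
    cornerWeight d r₁ (x - Pi.single r₂ 1) * ((x r₁ - x r₂) ^ 2 - 1) =
      cornerWeight d r₁ x * (x r₁ - x r₂) ^ 2 := by
  have hr : r₁ ≠ r₂ := (ne_of_mem_erase hr₂).symm
  have hrest : ∏ k ∈ ((range d).erase r₁).erase r₂,
      ((x - Pi.single r₂ 1 : ℕ → F) r₁ - 1 - (x - Pi.single r₂ 1 : ℕ → F) k) /
        ((x - Pi.single r₂ 1 : ℕ → F) r₁ - (x - Pi.single r₂ 1 : ℕ → F) k) =
      ∏ k ∈ ((range d).erase r₁).erase r₂, (x r₁ - 1 - x k) / (x r₁ - x k) :=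
    prod_congr rfl fun k hk => by simp [ne_of_mem_erase hk, hr]
  rw [cornerWeight, cornerWeight, ← mul_prod_erase _ _ hr₂, ← mul_prod_erase _ _ hr₂, hrest]
  simp only [Pi.sub_apply, Pi.single_eq_same, Pi.single_eq_of_ne hr, sub_zero]
  rw [show x r₁ - 1 - (x r₂ - 1) = x r₁ - x r₂ by ring,
    show x r₁ - (x r₂ - 1) = x r₁ - x r₂ + 1 by ring]
  field_simp
  ring

end Vandermonde

namespace YoungDiagram

variable {Y : YoungDiagram} {c : ℕ × ℕ}

lemma maximal_mem_iff : Maximal (· ∈ Y) c ↔ c.2 + 1 = Y.rowLen c.1 ∧ Y.rowLen (c.1 + 1) ≤ c.2 := by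
  constructor
  · intro h
    have hc : c.2 < Y.rowLen c.1 := mem_iff_lt_rowLen.1 h.1
    have hright : ¬ c.2 + 1 < Y.rowLen c.1 := fun hlt =>
      h.not_gt (mem_iff_lt_rowLen.2 hlt) (Prod.lt_iff.2 (Or.inr ⟨le_rfl, Nat.lt_succ_self _⟩))
    have hdown : ¬ c.2 < Y.rowLen (c.1 + 1) := fun hlt =>
      h.not_gt (mem_iff_lt_rowLen.2 hlt) (Prod.lt_iff.2 (Or.inl ⟨Nat.lt_succ_self _, le_rfl⟩))
    omega
  · rintro ⟨hrow, hnext⟩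
    refine maximal_iff_forall_gt.2 ⟨mem_iff_lt_rowLen.2 (by omega), fun b hcb hb => ?_⟩
    have hb' : b.2 < Y.rowLen b.1 := mem_iff_lt_rowLen.1 hb
    rcases Prod.lt_iff.1 hcb with ⟨h1, h2⟩ | ⟨h1, h2⟩
    · have := Y.rowLen_anti (c.1 + 1) b.1 h1
      omega
    · rcases h1.lt_or_eq with h1 | h1
      · have := Y.rowLen_anti (c.1 + 1) b.1 h1
        omega
      · rw [← h1] at hb'
        omega

lemma snd_eq_rowLen_sub_one (h : Maximal (· ∈ Y) c) : c.2 = Y.rowLen c.1 - 1 := by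
  have := maximal_mem_iff.1 h
  omega

lemma eq_of_maximal_of_fst_eq {b : ℕ × ℕ} (hb : Maximal (· ∈ Y) b) (hc : Maximal (· ∈ Y) c)
    (h : b.1 = c.1) : b = c :=
  Prod.ext h (by rw [snd_eq_rowLen_sub_one hb, snd_eq_rowLen_sub_one hc, h])

open scoped Classical in
/-- `Y` itself when `c` is not a corner of `Y`. -/
def erase (Y : YoungDiagram) (c : ℕ × ℕ) : YoungDiagram :=
  if h : Maximal (· ∈ Y) c then
    { cells := Y.cells.erase c
      isLowerSet := by
        rw [coe_erase]
        exact Y.isLowerSet.erase fun b hb hcb => h.eq_of_ge hb hcb }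
  else Y

lemma cells_erase (h : Maximal (· ∈ Y) c) : (Y.erase c).cells = Y.cells.erase c := by
  rw [erase, dif_pos h]

lemma mem_erase (h : Maximal (· ∈ Y) c) {b : ℕ × ℕ} : b ∈ Y.erase c ↔ b ≠ c ∧ b ∈ Y := by
  rw [← mem_cells, cells_erase h, Finset.mem_erase, mem_cells]

lemma card_erase (h : Maximal (· ∈ Y) c) : (Y.erase c).card = Y.card - 1 := by
  rw [YoungDiagram.card, cells_erase h, card_erase_of_mem ((mem_cells c).2 h.1)]

lemma rowLen_eq_of_forall_mem_iff {i k : ℕ} (h : ∀ j, (i, j) ∈ Y ↔ j < k) : Y.rowLen i = k :=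
  le_antisymm (le_of_not_gt fun hlt => (h k).1 (mem_iff_lt_rowLen.2 hlt) |>.false)
    (le_of_not_gt fun hlt => ((h _).2 hlt |> mem_iff_lt_rowLen.1).false)

lemma rowLen_erase_self (h : Maximal (· ∈ Y) c) : (Y.erase c).rowLen c.1 = c.2 := by
  have := maximal_mem_iff.1 h
  refine rowLen_eq_of_forall_mem_iff fun j => ?_
  rw [mem_erase h, mem_iff_lt_rowLen, Ne, Prod.ext_iff]
  omega

lemma rowLen_erase_of_ne (h : Maximal (· ∈ Y) c) {i : ℕ} (hi : i ≠ c.1) :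
    (Y.erase c).rowLen i = Y.rowLen i :=
  rowLen_eq_of_forall_mem_iff fun j => by
    rw [mem_erase h, mem_iff_lt_rowLen, Ne, Prod.ext_iff]
    simp [hi]

lemma maximal_erase (h₁ : Maximal (· ∈ Y) c) {b : ℕ × ℕ} (hb : Maximal (· ∈ Y) b) (hne : b ≠ c) :
    Maximal (· ∈ Y.erase c) b :=
  ⟨(mem_erase h₁).2 ⟨hne, hb.1⟩, fun _ hy hby => hb.2 ((mem_erase h₁).1 hy).2 hby⟩

lemma numSYT_eq_card_naturalLabeling (Y : YoungDiagram) :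
    numSYT Y = Nat.card (NaturalLabeling Y.cells Y.card) := by
  refine Nat.card_congr (Equiv.subtypeEquivRight fun T => and_congr_right fun _ => ?_)
  simp only [StrictMono, Subtype.forall, lt_iff_le_and_ne, Subtype.mk_le_mk, Prod.le_def, Ne,
    Subtype.mk.injEq]
  exact forall₂_congr fun _ _ => forall₂_congr fun _ _ => ⟨fun h h₁ => h h₁.1.1 h₁.1.2 h₁.2,
    fun h h₁ h₂ h₃ => h ⟨⟨h₁, h₂⟩, h₃⟩⟩

open scoped Classical in
theorem numSYT_eq_sum_erase (hY : Y.card ≠ 0) :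
    numSYT Y = ∑ c ∈ Y.cells with Maximal (· ∈ Y) c, numSYT (Y.erase c) := by
  obtain ⟨n, hn⟩ := Nat.exists_eq_add_one_of_ne_zero hY
  rw [numSYT_eq_card_naturalLabeling, hn, card_naturalLabeling_succ]
  refine sum_congr (by simp only [mem_cells]) fun c hc => ?_
  have hc : Maximal (· ∈ Y) c := by simpa using (mem_filter.1 hc).2
  rw [numSYT_eq_card_naturalLabeling, cells_erase hc, card_erase hc, hn, Nat.add_sub_cancel]

lemma numSYT_bot : numSYT ⊥ = 1 := by
  have : IsEmpty (⊥ : YoungDiagram).cells := ⟨fun x => notMem_bot x.1 ((mem_cells _).1 x.2)⟩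
  have : IsEmpty (Fin (⊥ : YoungDiagram).card) := Fin.isEmpty
  rw [numSYT_eq_card_naturalLabeling, Nat.card_eq_one_iff_unique]
  exact ⟨⟨fun T T' => Subtype.ext (funext isEmptyElim)⟩,
    ⟨⟨isEmptyElim, ⟨fun a => isEmptyElim a, isEmptyElim⟩, fun a => isEmptyElim a⟩⟩⟩

lemma rowLen_bot (i : ℕ) : (⊥ : YoungDiagram).rowLen i = 0 :=
  rowLen_eq_of_forall_mem_iff fun j => by simp [notMem_bot]

lemma fst_lt_of_mem {d : ℕ} (hd : Y.rowLen d = 0) (hc : c ∈ Y) : c.1 < d := by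
  by_contra! h
  have := Y.rowLen_anti d c.1 h
  have := mem_iff_lt_rowLen.1 hc
  omega

lemma card_eq_sum_rowLen {d : ℕ} (hd : Y.rowLen d = 0) :
    Y.card = ∑ i ∈ range d, Y.rowLen i := by
  rw [YoungDiagram.card, card_eq_sum_card_fiberwise fun c hc =>
    mem_range.2 (fst_lt_of_mem hd ((mem_cells c).1 hc))]
  refine sum_congr rfl fun i _ => ?_
  rw [rowLen_eq_card]
  rfl

open scoped Classical in
lemma sum_maximal_eq_sum_range {M : Type*} [AddCommMonoid M] {d : ℕ} (hd : Y.rowLen d = 0)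
    (g : ℕ → M) (hg : ∀ r < d, Y.rowLen (r + 1) = Y.rowLen r → g r = 0) :
    ∑ c ∈ Y.cells with Maximal (· ∈ Y) c, g c.1 = ∑ r ∈ range d, g r := by
  rw [← sum_image fun c hc c' hc' =>
    eq_of_maximal_of_fst_eq (mem_filter.1 hc).2 (mem_filter.1 hc').2]
  refine sum_subset (fun r hr => ?_) fun r hr hr' => hg r (mem_range.1 hr) ?_
  · obtain ⟨c, hc, rfl⟩ := mem_image.1 hr
    exact mem_range.2 (fst_lt_of_mem hd (mem_filter.1 hc).2.1)
  · refine le_antisymm (Y.rowLen_anti _ _ (Nat.le_succ r)) (not_lt.1 fun hlt => hr' ?_)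
    have hmax : Maximal (· ∈ Y) (r, Y.rowLen r - 1) :=
      maximal_mem_iff.2 ⟨by simp; omega, by simp; omega⟩
    exact mem_image.2 ⟨_, mem_filter.2 ⟨(mem_cells _).2 hmax.1, hmax⟩, rfl⟩

/-- The `ℓᵢ = λᵢ + d - 1 - i` of Frobenius' formula; only `i < d` matters. -/
def shiftedRowLen (Y : YoungDiagram) (d i : ℕ) : ℕ :=
  Y.rowLen i + (d - 1 - i)

variable {d : ℕ}

lemma injOn_shiftedRowLen (Y : YoungDiagram) (d : ℕ) :
    Set.InjOn (fun i => (Y.shiftedRowLen d i : ℚ)) (range d) := by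
  intro i hi j hj h
  simp only [coe_range, Set.mem_Iio, Nat.cast_inj, shiftedRowLen] at hi hj h
  rcases lt_trichotomy i j with hij | rfl | hij
  · have := Y.rowLen_anti i j hij.le
    omega
  · rfl
  · have := Y.rowLen_anti j i hij.le
    omega

lemma sum_shiftedRowLen (hd : Y.rowLen d = 0) :
    ∑ i ∈ range d, Y.shiftedRowLen d i = Y.card + d.choose 2 := by
  simp only [shiftedRowLen]
  rw [card_eq_sum_rowLen hd, sum_add_distrib, sum_range_reflect (fun i => i) d, sum_range_id,
    Nat.choose_two_right]

lemma shiftedRowLen_erase (h : Maximal (· ∈ Y) c) :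
    (fun i => ((Y.erase c).shiftedRowLen d i : ℚ)) =
      (fun i => (Y.shiftedRowLen d i : ℚ)) - Pi.single c.1 1 := by
  funext i
  by_cases hi : i = c.1
  · subst hi
    have := (maximal_mem_iff.1 h).1
    simp only [shiftedRowLen, rowLen_erase_self h, Pi.sub_apply, Pi.single_eq_same, ← this]
    push_cast
    ring
  · simp [shiftedRowLen, rowLen_erase_of_ne h hi, hi]

lemma shiftedRowLen_erase_self (h : Maximal (· ∈ Y) c) :
    Y.shiftedRowLen d c.1 = (Y.erase c).shiftedRowLen d c.1 + 1 := by
  have := (maximal_mem_iff.1 h).1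
  rw [shiftedRowLen, shiftedRowLen, rowLen_erase_self h]
  omega

lemma prod_factorial_shiftedRowLen_erase (h : Maximal (· ∈ Y) c) (hd : c.1 < d) :
    ∏ i ∈ range d, (Y.shiftedRowLen d i)! =
      Y.shiftedRowLen d c.1 * ∏ i ∈ range d, ((Y.erase c).shiftedRowLen d i)! := by
  have hrest : ∏ i ∈ (range d).erase c.1, (Y.shiftedRowLen d i)! =
      ∏ i ∈ (range d).erase c.1, ((Y.erase c).shiftedRowLen d i)! :=
    prod_congr rfl fun i hi => by
      simp only [shiftedRowLen, rowLen_erase_of_ne h (ne_of_mem_erase hi)]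
  rw [← mul_prod_erase _ _ (mem_range.2 hd), ← mul_prod_erase _ _ (mem_range.2 hd), hrest,
    shiftedRowLen_erase_self h, Nat.factorial_succ]
  ring

lemma rowLen_erase_eq_zero (h : Maximal (· ∈ Y) c) (hd : Y.rowLen d = 0) :
    (Y.erase c).rowLen d = 0 := by
  rw [rowLen_erase_of_ne h (fst_lt_of_mem hd h.1).ne', hd]

lemma shiftedRowLen_mul_vandermondeProd_eq_zero (hd : Y.rowLen d = 0) {r : ℕ} (hr : r < d)
    (hflat : Y.rowLen (r + 1) = Y.rowLen r) :
    (Y.shiftedRowLen d r : ℚ) *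
      vandermondeProd d ((fun i => (Y.shiftedRowLen d i : ℚ)) - Pi.single r 1) = 0 := by
  rcases Nat.lt_or_ge (r + 1) d with hr1 | hr1
  · refine mul_eq_zero_of_right _ (vandermondeProd_eq_zero (Nat.lt_succ_self r) hr1 ?_)
    simp only [shiftedRowLen, Pi.sub_apply, Pi.single_eq_same, hflat,
      Pi.single_eq_of_ne (Nat.succ_ne_self r)]
    rw [show d - 1 - r = d - 1 - (r + 1) + 1 by omega]
    push_cast
    ring
  · have : Y.rowLen r = 0 := by rw [← hflat, show r + 1 = d by omega, hd]
    simp [shiftedRowLen, this, show d - 1 - r = 0 by omega]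

theorem numSYT_mul_prod_factorial (Y : YoungDiagram) (hd : Y.rowLen d = 0) :
    ((numSYT Y * ∏ i ∈ range d, (Y.shiftedRowLen d i)! : ℕ) : ℚ) =
      (Y.card)! * vandermondeProd d (fun i => (Y.shiftedRowLen d i : ℚ)) := by
  induction hn : Y.card generalizing Y with
  | zero =>
    obtain rfl : Y = ⊥ := YoungDiagram.ext (card_eq_zero.1 hn)
    simp only [shiftedRowLen, rowLen_bot, zero_add, numSYT_bot]
    push_cast
    rw [vandermondeProd_range_reverse]
    simp
  | succ n ih =>
    set ℓ : ℕ → ℚ := fun i => (Y.shiftedRowLen d i : ℚ) with hℓ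
    have hterm (c) (hc : Maximal (· ∈ Y) c) :
        ((numSYT (Y.erase c) * ∏ i ∈ range d, (Y.shiftedRowLen d i)! : ℕ) : ℚ) =
          n ! * (ℓ c.1 * vandermondeProd d (ℓ - Pi.single c.1 1)) := by
      have hcd := fst_lt_of_mem hd hc.1
      rw [prod_factorial_shiftedRowLen_erase hc hcd, mul_left_comm, Nat.cast_mul,
        ih (Y.erase c) (rowLen_erase_eq_zero hc hd) (by rw [card_erase hc, hn, Nat.add_sub_cancel]),
        shiftedRowLen_erase hc]
      ring
    have hsum : ∑ r ∈ range d, ℓ r - d.choose 2 = n + 1 := by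
      rw [hℓ, ← Nat.cast_sum, sum_shiftedRowLen hd, hn]
      push_cast
      ring
    classical
    rw [numSYT_eq_sum_erase (by omega), sum_mul, Nat.cast_sum,
      sum_congr rfl fun c hc => hterm c (mem_filter.1 hc).2, ← mul_sum,
      sum_maximal_eq_sum_range hd (fun r => ℓ r * vandermondeProd d (ℓ - Pi.single r 1))
        fun _ => shiftedRowLen_mul_vandermondeProd_eq_zero hd,
      sum_mul_vandermondeProd_sub_single (injOn_shiftedRowLen Y d), hsum, Nat.factorial_succ]
    push_cast
    ring

lemma rowLen_colLen_zero (Y : YoungDiagram) : Y.rowLen (Y.colLen 0) = 0 := by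
  by_contra! h
  exact (lt_irrefl _) (mem_iff_lt_colLen.1 (mem_iff_lt_rowLen.2 (Nat.pos_of_ne_zero h)))

lemma numSYT_ne_zero (Y : YoungDiagram) : numSYT Y ≠ 0 := by
  have h := numSYT_mul_prod_factorial Y (rowLen_colLen_zero Y)
  intro h0
  rw [h0, zero_mul, Nat.cast_zero, eq_comm, mul_eq_zero] at h
  exact h.elim (by positivity) (vandermondeProd_ne_zero (injOn_shiftedRowLen Y _))

theorem card_mul_numSYT_erase (h : Maximal (· ∈ Y) c) (hd : Y.rowLen d = 0) :
    Y.card * numSYT (Y.erase c) =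
      numSYT Y * cornerWeight d c.1 (fun i => (Y.shiftedRowLen d i : ℚ)) := by
  have hcd := fst_lt_of_mem hd h.1
  have hn : Y.card = (Y.erase c).card + 1 := by
    have : 0 < Y.card := card_pos.2 ⟨c, (mem_cells c).2 h.1⟩
    rw [card_erase h]
    omega
  have hY := numSYT_mul_prod_factorial Y hd
  have hE := numSYT_mul_prod_factorial (Y.erase c) (rowLen_erase_eq_zero h hd)
  have hratio := vandermondeProd_sub_single_mul hcd (fun i => (Y.shiftedRowLen d i : ℚ))
  rw [prod_factorial_shiftedRowLen_erase h hcd, hn, Nat.factorial_succ] at hY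
  rw [shiftedRowLen_erase h] at hE
  have hprod : (∏ i ∈ range d, ((Y.erase c).shiftedRowLen d i)! : ℚ) ≠ 0 := by positivity
  have hP := prod_erase_sub_ne_zero (injOn_shiftedRowLen Y d) (mem_range.2 hcd)
  rw [cornerWeight, prod_div_distrib, ← mul_div_assoc, ← mul_div_assoc, eq_div_iff hP]
  refine mul_right_cancel₀ hprod ?_
  set P := ∏ k ∈ (range d).erase c.1, ((Y.shiftedRowLen d c.1 : ℚ) - Y.shiftedRowLen d k)
  set Q := ∏ k ∈ (range d).erase c.1, ((Y.shiftedRowLen d c.1 : ℚ) - 1 - Y.shiftedRowLen d k)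
  set m := (Y.erase c).card
  push_cast at hY hE
  rw [hn]
  push_cast
  linear_combination ((m : ℚ) + 1) * P * hE + ((m : ℚ) + 1) * m ! * hratio - Q * hY

def content (c : ℕ × ℕ) : ℤ :=
  c.2 - c.1

lemma shiftedRowLen_sub_shiftedRowLen {c₁ c₂ : ℕ × ℕ} (h₁ : Maximal (· ∈ Y) c₁)
    (h₂ : Maximal (· ∈ Y) c₂) (hd : Y.rowLen d = 0) :
    (Y.shiftedRowLen d c₁.1 : ℚ) - Y.shiftedRowLen d c₂.1 = content c₁ - content c₂ := by
  have hrow₁ := (maximal_mem_iff.1 h₁).1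
  have hrow₂ := (maximal_mem_iff.1 h₂).1
  have := fst_lt_of_mem hd h₁.1
  have := fst_lt_of_mem hd h₂.1
  simp only [shiftedRowLen, content]
  rw [← hrow₁, ← hrow₂]
  push_cast [Nat.cast_sub (by omega : c₁.1 ≤ d - 1), Nat.cast_sub (by omega : c₂.1 ≤ d - 1)]
  ring

theorem card_mul_numSYT_erase_mul_numSYT_erase {c₁ c₂ : ℕ × ℕ} (h₁ : Maximal (· ∈ Y) c₁)
    (h₂ : Maximal (· ∈ Y) c₂) (hne : c₁ ≠ c₂) :
    Y.card * numSYT (Y.erase c₁) * numSYT (Y.erase c₂) * ((content c₁ - content c₂ : ℤ) : ℚ) ^ 2 =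
      (Y.card - 1) * (((content c₁ - content c₂ : ℤ) : ℚ) ^ 2 - 1) * numSYT Y *
        numSYT ((Y.erase c₂).erase c₁) := by
  have hrow : c₁.1 ≠ c₂.1 := fun h => hne (eq_of_maximal_of_fst_eq h₁ h₂ h)
  have hd := rowLen_colLen_zero Y
  set d := Y.colLen 0
  set ℓ : ℕ → ℚ := fun i => Y.shiftedRowLen d i
  have hr₁ := mem_range.2 (fst_lt_of_mem hd h₁.1)
  have hr₂ := mem_range.2 (fst_lt_of_mem hd h₂.1)
  have ha : ℓ c₁.1 - ℓ c₂.1 = ((content c₁ - content c₂ : ℤ) : ℚ) := by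
    push_cast
    exact shiftedRowLen_sub_shiftedRowLen h₁ h₂ hd
  have ha₀ : ℓ c₁.1 - ℓ c₂.1 ≠ 0 :=
    sub_ne_zero.2 fun h => hrow (injOn_shiftedRowLen Y d hr₁ hr₂ h)
  have ha₁ : ℓ c₁.1 - ℓ c₂.1 + 1 ≠ 0 := by
    have hinj := injOn_shiftedRowLen (Y.erase c₂) d
    rw [shiftedRowLen_erase h₂] at hinj
    refine fun h => hrow (hinj hr₁ hr₂ ?_)
    simp only [Pi.sub_apply, Pi.single_eq_same, Pi.single_eq_of_ne hrow]
    linear_combination h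
  have E₁ := card_mul_numSYT_erase h₁ hd
  have E₂ := card_mul_numSYT_erase (maximal_erase h₂ h₁ hne) (rowLen_erase_eq_zero h₂ hd)
  rw [shiftedRowLen_erase h₂, card_erase h₂,
    Nat.cast_sub (card_pos.2 ⟨c₂, (mem_cells c₂).2 h₂.1⟩)] at E₂
  have hw := cornerWeight_sub_single_mul (Finset.mem_erase.2 ⟨hrow.symm, hr₂⟩) ha₀ ha₁
  rw [ha] at hw
  push_cast at E₂
  linear_combination (numSYT (Y.erase c₂) * ((content c₁ - content c₂ : ℤ) : ℚ) ^ 2) * E₁ -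
    (numSYT Y * (((content c₁ - content c₂ : ℤ) : ℚ) ^ 2 - 1)) * E₂ -
    (numSYT Y * numSYT (Y.erase c₂)) * hw

lemma abs_content_sub {c₁ c₂ : ℕ × ℕ} (h₁ : Maximal (· ∈ Y) c₁) (h₂ : Maximal (· ∈ Y) c₂)
    (hne : c₁ ≠ c₂) :
    |content c₁ - content c₂| = |(c₁.1 : ℤ) - c₂.1| + |(c₁.2 : ℤ) - c₂.2| := by
  have hrow : c₁.1 ≠ c₂.1 := fun h => hne (eq_of_maximal_of_fst_eq h₁ h₂ h)
  have hc₁ := maximal_mem_iff.1 h₁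
  have hc₂ := maximal_mem_iff.1 h₂
  simp only [content]
  rcases hrow.lt_or_gt with h | h
  · have := Y.rowLen_anti (c₁.1 + 1) c₂.1 h
    rw [abs_of_pos (by omega), abs_of_neg (by omega), abs_of_pos (by omega)]
    ring
  · have := Y.rowLen_anti (c₂.1 + 1) c₁.1 h
    rw [abs_of_neg (by omega), abs_of_pos (by omega), abs_of_neg (by omega)]
    ring

lemma maximal_of_coe_cells_eq {Z : YoungDiagram}
    (hZ : (Z.cells : Set (ℕ × ℕ)) = ↑Y.cells \ {c}) (hc : c ∈ Y) : Maximal (· ∈ Y) c := by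
  refine ⟨hc, fun b hb hcb => le_of_eq (by_contra fun hne => ?_)⟩
  have hbZ : b ∈ (Z.cells : Set (ℕ × ℕ)) := hZ ▸ ⟨(mem_cells b).2 hb, hne⟩
  have hcZ : c ∈ (Z.cells : Set (ℕ × ℕ)) := Z.isLowerSet hcb hbZ
  rw [hZ] at hcZ
  exact hcZ.2 rfl

lemma eq_erase_of_coe_cells_eq {Z : YoungDiagram}
    (hZ : (Z.cells : Set (ℕ × ℕ)) = ↑Y.cells \ {c}) (hc : c ∈ Y) : Z = Y.erase c :=
  YoungDiagram.ext <| coe_injective <| by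
    rw [cells_erase (maximal_of_coe_cells_eq hZ hc), coe_erase, hZ]

lemma eq_erase_erase_of_coe_cells_eq {Z : YoungDiagram} {c₁ c₂ : ℕ × ℕ}
    (hsub : Z.cells ⊆ Y.cells) (hZ : (↑Y.cells \ ↑Z.cells : Set (ℕ × ℕ)) = {c₁, c₂})
    (h₁ : Maximal (· ∈ Y) c₁) (h₂ : Maximal (· ∈ Y) c₂) (hne : c₁ ≠ c₂) :
    Z = (Y.erase c₂).erase c₁ :=
  YoungDiagram.ext <| coe_injective <| by
    rw [cells_erase (maximal_erase h₂ h₁ hne), cells_erase h₂, coe_erase, coe_erase,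
      Set.sdiff_sdiff, Set.union_comm, ← Set.insert_eq, ← hZ,
      Set.sdiff_sdiff_cancel_left (coe_subset.2 hsub)]

end YoungDiagram

theorem stmt13_general (n : ℕ) (Yl Yk Ya1 Ya2 : YoungDiagram) (i₁ j₁ i₂ j₂ L : ℕ)
    (h2n : 2 ≤ n) (hln : Yl.card = n)
    (hsub : Yk.cells ⊆ Yl.cells)
    (hdiff : (↑Yl.cells \ ↑Yk.cells : Set (ℕ × ℕ)) = {(i₁, j₁), (i₂, j₂)})
    (hne : (i₁, j₁) ≠ (i₂, j₂))
    (hL : (L : ℤ) = |(i₁ : ℤ) - (i₂ : ℤ)| + |(j₁ : ℤ) - (j₂ : ℤ)|)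
    (hL1 : 1 < L)
    (ha1 : (↑Ya1.cells : Set (ℕ × ℕ)) = ↑Yl.cells \ {(i₁, j₁)})
    (ha2 : (↑Ya2.cells : Set (ℕ × ℕ)) = ↑Yl.cells \ {(i₂, j₂)}) :
    (n : ℚ) * ((n : ℚ) - 1)⁻¹ *
        ((numSYT Ya1 : ℚ) * (numSYT Ya2 : ℚ)) / ((numSYT Yl : ℚ) * (numSYT Yk : ℚ))
      = 1 - ((L : ℚ))⁻¹ ^ 2 := by
  have hc₁ : (i₁, j₁) ∈ Yl := ((Set.ext_iff.1 hdiff _).2 (by simp)).1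
  have hc₂ : (i₂, j₂) ∈ Yl := ((Set.ext_iff.1 hdiff _).2 (by simp)).1
  have h₁ := YoungDiagram.maximal_of_coe_cells_eq ha1 hc₁
  have h₂ := YoungDiagram.maximal_of_coe_cells_eq ha2 hc₂
  obtain rfl := YoungDiagram.eq_erase_of_coe_cells_eq ha1 hc₁
  obtain rfl := YoungDiagram.eq_erase_of_coe_cells_eq ha2 hc₂
  obtain rfl := YoungDiagram.eq_erase_erase_of_coe_cells_eq hsub hdiff h₁ h₂ hne
  have hcontent :
      (YoungDiagram.content (i₁, j₁) - YoungDiagram.content (i₂, j₂)) ^ 2 = (L : ℤ) ^ 2 := by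
    rw [hL, ← YoungDiagram.abs_content_sub h₁ h₂ hne, sq_abs]
  have key := YoungDiagram.card_mul_numSYT_erase_mul_numSYT_erase h₁ h₂ hne
  rw [← Int.cast_pow, hcontent, hln] at key
  have hL0 : (L : ℚ) ≠ 0 := Nat.cast_ne_zero.2 (by omega)
  have hn1 : (n : ℚ) - 1 ≠ 0 := sub_ne_zero.2 (by exact_mod_cast (by omega : n ≠ 1))
  have := YoungDiagram.numSYT_ne_zero Yl
  have := YoungDiagram.numSYT_ne_zero ((Yl.erase (i₂, j₂)).erase (i₁, j₁))
  push_cast at key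
  field_simp
  linear_combination key

/-- Let `λ ⊢ n` and `κ ⊂ λ` with `|κ| = n − 2`, such that `λ/κ` consists of two boxes at
positions `(i₁,j₁)` and `(i₂,j₂)` at distance `L = |i₁−i₂| + |j₁−j₂| > 1` (so both are
corners of `λ`).  Let `α¹`, `α²` be obtained from `λ` by deleting the corners `(i₁,j₁)`,
`(i₂,j₂)` respectively.  Then
`n (n−1)⁻¹ · (#SYT(α¹) #SYT(α²)) / (#SYT(λ) #SYT(κ)) = 1 − L⁻²`. -/
theorem stmt13 (n : ℕ) (Yl Yk Ya1 Ya2 : YoungDiagram) (i₁ j₁ i₂ j₂ L : ℕ)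
    (h2n : 2 ≤ n) (hln : Yl.card = n) (hkn : Yk.card = n - 2)
    (hsub : Yk.cells ⊆ Yl.cells)
    (hdiff : (↑Yl.cells \ ↑Yk.cells : Set (ℕ × ℕ)) = {(i₁, j₁), (i₂, j₂)})
    (hne : (i₁, j₁) ≠ (i₂, j₂))
    (hL : (L : ℤ) = |(i₁ : ℤ) - (i₂ : ℤ)| + |(j₁ : ℤ) - (j₂ : ℤ)|)
    (hL1 : 1 < L)
    (ha1 : (↑Ya1.cells : Set (ℕ × ℕ)) = ↑Yl.cells \ {(i₁, j₁)})
    (ha2 : (↑Ya2.cells : Set (ℕ × ℕ)) = ↑Yl.cells \ {(i₂, j₂)}) :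
    (n : ℚ) * ((n : ℚ) - 1)⁻¹ *
        ((numSYT Ya1 : ℚ) * (numSYT Ya2 : ℚ)) / ((numSYT Yl : ℚ) * (numSYT Yk : ℚ))
      = 1 - ((L : ℚ))⁻¹ ^ 2 :=
  stmt13_general n Yl Yk Ya1 Ya2 i₁ j₁ i₂ j₂ L h2n hln hsub hdiff hne hL hL1 ha1 ha2

end
end

section
/- Let ψ : X → Y be a map of smooth complex varieties of the same dimension, quasifinite, and let x ∈ X be a point where the scheme-theoretic fibre of ψ through x has length exactly 2 at x (ramification index 2). Then the Jacobian determinant of ψ, cutting out the ramification divisor R, is part of a minimal generating set of the maximal ideal at x; in particular R is smooth at x. -/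
/-!
The fibre algebra `A ⧸ I`, `I = m_B A`, has length two and residue field `ℂ`, so
`m = ℂ t + I` for some `t ∈ m \ I`, and `m² ⊆ I`. Write `N` for the matrix of the differentials
`d y_k` of generators `y_k` of `m_B`; it agrees with the Jacobian matrix up to a unit, because
the `d y_k` form a basis of `Ω_B`. At the closed point, the columns of `N` span the image of `I`
in `m/m² ≅ ℂⁿ`. That image is a hyperplane missing `dt`. So `det N ∈ m`, but `adj N` does not
vanish at the closed point.

Modulo `I`, every `t • ω` lies in the span of the `d y_k`, using `t dt = ½ d(t²)` and `t² ∈ I`.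
So `N Q ≡ t • 1` for some `Q`. If `det N ∈ I`, then `t • adj N ≡ adj N · N · Q ≡ 0` modulo `I`.
Since `t ∉ I`, this puts `adj N` in `m`, which is a contradiction. Hence
`det N ∉ I ⊇ m²`.
-/

open IsLocalRing Submodule KaehlerDifferential

namespace Matrix

variable {ι R : Type*}

theorem col_updateCol [DecidableEq ι] (N : Matrix ι ι R) (j : ι) (v : ι → R) :
    (N.updateCol j v).col = Function.update N.col j v := by
  rw [col, ← updateRow_transpose]
  rfl

variable [Fintype ι] [DecidableEq ι]

theorem span_col_eq_top_iff_isUnit_det [CommRing R] (N : Matrix ι ι R) :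
    span R (Set.range N.col) = ⊤ ↔ IsUnit N.det := by
  rw [← range_mulVecLin, LinearMap.range_eq_top, coe_mulVecLin, mulVec_surjective_iff_isUnit,
    isUnit_iff_isUnit_det]

theorem smul_adjugate_eq_zero [CommRing R] {N : Matrix ι ι R} {s : R}
    (hs : ∀ v, s • v ∈ span R (Set.range N.col)) (hdet : N.det = 0) : s • N.adjugate = 0 := by
  refine ext_iff_mulVec.2 fun v => ?_
  obtain ⟨w, hw⟩ := (N.range_mulVecLin ▸ hs v : s • v ∈ LinearMap.range N.mulVecLin)
  calc (s • N.adjugate) *ᵥ v = N.adjugate *ᵥ (N *ᵥ w) := by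
        rw [smul_mulVec, ← mulVec_smul, ← hw, mulVecLin_apply]
    _ = 0 *ᵥ v := by rw [mulVec_mulVec, adjugate_mul, hdet, zero_smul, zero_mulVec, zero_mulVec]

theorem adjugate_ne_zero_of_span_insert_col_eq_top [Field R] {N : Matrix ι ι R} {v : ι → R}
    (hv : span R (insert v (Set.range N.col)) = ⊤) (hdet : N.det = 0) : N.adjugate ≠ 0 := by
  have hdep : ¬ LinearIndependent R N.col := by
    rwa [linearIndependent_cols_iff_isUnit, isUnit_iff_isUnit_det, isUnit_iff_ne_zero, not_not]
  obtain ⟨j, hj⟩ : ∃ j, N.col j ∈ span R (N.col '' (Set.univ \ {j})) := by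
    simpa [linearIndependent_iff_notMem_span] using hdep
  intro hadj
  -- Replacing the redundant column `j` by `v` gives an invertible matrix, whose determinant
  -- is the `j`-th Cramer coordinate `(adj N *ᵥ v) j`.
  have hspan : span R (Set.range (N.updateCol j v).col) = ⊤ := by
    rw [eq_top_iff, ← hv, span_le, col_updateCol]
    have hsub : N.col '' (Set.univ \ {j}) ⊆ Set.range (Function.update N.col j v) := by
      rintro _ ⟨i, hi, rfl⟩
      exact ⟨i, Function.update_of_ne (by simpa using hi) _ _⟩
    rintro _ (rfl | ⟨i, rfl⟩)
    · exact subset_span ⟨j, Function.update_self _ _ _⟩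
    · obtain rfl | hij := eq_or_ne i j
      · exact span_mono hsub hj
      · exact subset_span (hsub ⟨i, by simpa using hij, rfl⟩)
  have hunit := (span_col_eq_top_iff_isUnit_det _).1 hspan
  rw [← cramer_apply, cramer_eq_adjugate_mulVec, hadj, zero_mulVec] at hunit
  exact not_isUnit_zero hunit

end Matrix

theorem Finset.exists_fin_range_eq {α : Type*} {s : Finset α} {n : ℕ} (hs : s.card = n) :
    ∃ x : Fin n → α, Set.range x = s :=
  ⟨fun i => (s.equivFinOfCardEq hs).symm i, by
    ext a
    refine ⟨?_, fun ha => ⟨s.equivFinOfCardEq hs ⟨a, ha⟩, by simp⟩⟩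
    rintro ⟨i, rfl⟩
    exact ((s.equivFinOfCardEq hs).symm i).2⟩

theorem Module.Basis.toMatrix_comp_eq_toMatrix_mul {B A M N ι κ ι' : Type*} [CommRing B]
    [CommRing A] [Algebra B A] [AddCommGroup M] [Module B M] [AddCommGroup N] [Module A N]
    [Module B N] [IsScalarTower B A N] [Fintype ι] (f : M →ₗ[B] N)
    (bM : Module.Basis ι B M) (bN : Module.Basis κ A N) (v : ι' → M) :
    bN.toMatrix (f ∘ v) = bN.toMatrix (f ∘ bM) * (bM.toMatrix v).map (algebraMap B A) := by
  ext i j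
  simp only [Matrix.mul_apply, Matrix.map_apply, Module.Basis.toMatrix_apply, Function.comp_apply]
  conv_lhs => rw [← bM.sum_repr (v j)]
  simp only [map_sum, map_smul, ← algebraMap_smul A (bM.repr (v j) _), Finsupp.coe_finsetSum,
    Finset.sum_apply, Finsupp.smul_apply, smul_eq_mul, mul_comm]

theorem KaehlerDifferential.det_toMatrix_D_algebraMap {k B A ι : Type*} [CommRing k]
    [CommRing B] [CommRing A] [Algebra k B] [Algebra k A] [Algebra B A] [IsScalarTower k B A]
    [SMulCommClass k B A]
    [Fintype ι] [DecidableEq ι] (bB : Module.Basis ι B Ω[B⁄k]) (bA : Module.Basis ι A Ω[A⁄k])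
    (y : ι → B) :
    (bA.toMatrix fun j => D k A (algebraMap B A (y j))).det =
      (bA.toMatrix (KaehlerDifferential.map k k B A ∘ bB)).det *
        algebraMap B A (bB.toMatrix fun j => D k B (y j)).det := by
  rw [RingHom.map_det, RingHom.mapMatrix_apply, ← Matrix.det_mul,
    ← bB.toMatrix_comp_eq_toMatrix_mul]
  simp [Function.comp_def]

namespace KaehlerDifferential

variable {k A ι : Type*} [CommRing k] [CommRing A] [Algebra k A]
  (b : Module.Basis ι A Ω[A⁄k]) (R : Type*) [CommRing R] [Algebra A R]

noncomputable def reducedCoords : Ω[A⁄k] →ₗ[A] (ι → R) :=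
  LinearMap.pi fun i => (Algebra.linearMap A R).comp (b.coord i)

variable {R}

theorem reducedCoords_surjective [Finite ι] (hR : Function.Surjective (algebraMap A R)) :
    Function.Surjective (reducedCoords b R) := by
  intro v
  choose a ha using fun i => hR (v i)
  refine ⟨b.equivFun.symm a, funext fun i => ?_⟩
  change algebraMap A R (b.equivFun (b.equivFun.symm a) i) = v i
  rw [LinearEquiv.apply_symm_apply, ha]

variable (R) [Algebra k R] [IsScalarTower k A R]

/-- For `R` the residue field this is the differential at the closed point; for `R = A ⧸ I` it is
`d` modulo `I • Ω`. -/
noncomputable def reducedD : Derivation k A (ι → R) :=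
  (reducedCoords b R).compDer (D k A)

variable {R}

theorem eq_top_of_forall_reducedD_mem [Finite ι] (hR : Function.Surjective (algebraMap A R))
    {S : Submodule A (ι → R)} (hS : ∀ a, reducedD b R a ∈ S) : S = ⊤ := by
  have hcomap : S.comap (reducedCoords b R) = ⊤ := by
    rw [eq_top_iff, ← span_range_derivation k A, span_le]
    rintro _ ⟨a, rfl⟩
    exact hS a
  rw [eq_top_iff]
  intro v _
  obtain ⟨ω, rfl⟩ := reducedCoords_surjective b hR v
  exact (hcomap.ge trivial : ω ∈ S.comap _)

theorem reducedD_sum_mul {ι' : Type*} [Fintype ι'] {x : ι' → A}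
    (hx : ∀ j, algebraMap A R (x j) = 0) (g : ι' → A) :
    reducedD b R (∑ j, g j * x j) = ∑ j, g j • reducedD b R (x j) := by
  have hxv : ∀ j (v : ι → R), x j • v = 0 := fun j v => by
    ext i
    simp [Algebra.smul_def, hx]
  simp [Derivation.leibniz, hxv]

theorem reducedD_mem_span {ι' : Type*} [Fintype ι'] {x : ι' → A}
    (hx : ∀ j, algebraMap A R (x j) = 0) {a : A} (ha : a ∈ Ideal.span (Set.range x)) :
    reducedD b R a ∈ span A (Set.range (reducedD b R ∘ x)) := by
  obtain ⟨g, rfl⟩ := (mem_span_range_iff_exists_fun A).1 ha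
  simp only [smul_eq_mul, reducedD_sum_mul b hx]
  exact sum_mem fun j _ => smul_mem _ _ (subset_span ⟨j, rfl⟩)

theorem col_mapMatrix_toMatrix_D [Fintype ι] [DecidableEq ι] (y : ι → A) :
    ((algebraMap A R).mapMatrix (b.toMatrix fun j => D k A (y j))).col = reducedD b R ∘ y :=
  rfl

end KaehlerDifferential

section ResidueField

variable {k A : Type*} [Field k] [CommRing A] [IsLocalRing A] [Algebra k A]

noncomputable def quotientToResidueField {I : Ideal A} (hI : I ≤ maximalIdeal A) :
    A ⧸ I →ₐ[k] ResidueField A :=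
  Ideal.Quotient.liftₐ I (IsScalarTower.toAlgHom k A (ResidueField A))
    fun a ha => (residue_eq_zero_iff a).2 (hI ha)

theorem quotientToResidueField_surjective {I : Ideal A} (hI : I ≤ maximalIdeal A) :
    Function.Surjective (quotientToResidueField (k := k) hI) := fun z => by
  obtain ⟨a, rfl⟩ := residue_surjective z
  exact ⟨Ideal.Quotient.mk I a, rfl⟩

theorem surjective_algebraMap_residueField [IsAlgClosed k] {I : Ideal A}
    (hI : I ≤ maximalIdeal A) [Module.Finite k (A ⧸ I)] :
    Function.Surjective (algebraMap k (ResidueField A)) :=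
  have : Module.Finite k (ResidueField A) :=
    Module.Finite.of_surjective (quotientToResidueField hI).toLinearMap
      (quotientToResidueField_surjective hI)
  IsAlgClosed.algebraMap_bijective_of_isIntegral.2

theorem exists_sub_algebraMap_mem_maximalIdeal
    (hk : Function.Surjective (algebraMap k (ResidueField A))) (a : A) :
    ∃ c : k, a - algebraMap k A c ∈ maximalIdeal A := by
  obtain ⟨c, hc⟩ := hk (residue A a)
  refine ⟨c, (residue_eq_zero_iff _).1 ?_⟩
  rw [map_sub, ← ResidueField.algebraMap_eq, ← IsScalarTower.algebraMap_apply, hc,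
    ResidueField.algebraMap_eq, sub_self]

theorem surjective_algebraMap_residueField_of_isLocalHom {B : Type*} [CommRing B] [IsLocalRing B]
    [Algebra k B] [Algebra B A] [IsScalarTower k B A] [IsLocalHom (algebraMap B A)]
    (hk : Function.Surjective (algebraMap k (ResidueField A))) :
    Function.Surjective (algebraMap k (ResidueField B)) := by
  intro z
  obtain ⟨b, rfl⟩ := residue_surjective z
  obtain ⟨c, hc⟩ := exists_sub_algebraMap_mem_maximalIdeal hk (algebraMap B A b)
  have hc' : b - algebraMap k B c ∈ maximalIdeal B := by
    rw [← maximalIdeal_comap (algebraMap B A), Ideal.mem_comap, map_sub,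
      ← IsScalarTower.algebraMap_apply]
    exact hc
  refine ⟨c, ?_⟩
  rw [IsScalarTower.algebraMap_apply k B (ResidueField B), ResidueField.algebraMap_eq, eq_comm,
    ← sub_eq_zero, ← map_sub, residue_eq_zero_iff]
  exact hc'

theorem exists_forall_sub_smul_mem_of_finrank_quotient_eq_two
    (hk : Function.Surjective (algebraMap k (ResidueField A))) {I : Ideal A}
    (hI : I ≤ maximalIdeal A) (h2 : Module.finrank k (A ⧸ I) = 2) :
    ∃ t ∈ maximalIdeal A, t ∉ I ∧ ∀ a ∈ maximalIdeal A, ∃ c : k, a - c • t ∈ I := by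
  have : FiniteDimensional k (A ⧸ I) := Module.finite_of_finrank_eq_succ h2
  let f := (quotientToResidueField (k := k) hI).toLinearMap
  have hκ : Module.finrank k (ResidueField A) = 1 :=
    (finrank_eq_one_iff_of_nonzero' 1 one_ne_zero).2 fun w => by
      obtain ⟨c, rfl⟩ := hk w
      exact ⟨c, (Algebra.algebraMap_eq_smul_one c).symm⟩
  have hker : Module.finrank k (LinearMap.ker f) = 1 := by
    have := LinearMap.finrank_range_add_finrank_ker f
    rw [LinearMap.range_eq_top.2 (quotientToResidueField_surjective hI), finrank_top, hκ,
      h2] at this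
    omega
  obtain ⟨⟨v, hv⟩, hv0, hspan⟩ := finrank_eq_one_iff'.1 hker
  obtain ⟨t, rfl⟩ := Ideal.Quotient.mk_surjective v
  refine ⟨t, (residue_eq_zero_iff t).1 hv,
    fun htI => hv0 (Subtype.ext (Ideal.Quotient.eq_zero_iff_mem.2 htI)), fun a ha => ?_⟩
  obtain ⟨c, hc⟩ := hspan ⟨Ideal.Quotient.mk I a, (residue_eq_zero_iff a).2 ha⟩
  refine ⟨c, Ideal.Quotient.eq_zero_iff_mem.1 ?_⟩
  have hc' : c • Ideal.Quotient.mk I t = Ideal.Quotient.mk I a := congrArg Subtype.val hc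
  rw [map_sub, ← hc', Algebra.smul_def, Algebra.smul_def, map_mul, Ideal.Quotient.mk_algebraMap,
    sub_self]

theorem maximalIdeal_sq_le_of_forall_sub_smul_mem {I : Ideal A} {t : A}
    (ht : t ∈ maximalIdeal A) (htI : t ∉ I)
    (hgen : ∀ a ∈ maximalIdeal A, ∃ c : k, a - c • t ∈ I) : maximalIdeal A ^ 2 ≤ I := by
  -- `t² ≡ c t`, and `c ≠ 0` would make `t - c` a unit with `t (t - c) ∈ I`.
  have htt : t * t ∈ I := by
    obtain ⟨c, hc⟩ := hgen (t * t) (Ideal.mul_mem_left _ _ ht)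
    by_contra htt
    have hc0 : c ≠ 0 := by
      rintro rfl
      exact htt (by simpa using hc)
    have hu : IsUnit (t - algebraMap k A c) := by
      by_contra hnu
      have := sub_mem ht ((mem_maximalIdeal _).2 hnu)
      rw [sub_sub_cancel] at this
      exact (mem_maximalIdeal _).1 this ((isUnit_iff_ne_zero.2 hc0).map (algebraMap k A))
    refine htI ((Ideal.mul_unit_mem_iff_mem I hu).1 ?_)
    convert hc using 1
    rw [Algebra.smul_def]
    ring
  rw [sq, Ideal.mul_le]
  intro a ha b hb
  obtain ⟨c, hc⟩ := hgen a ha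
  obtain ⟨d, hd⟩ := hgen b hb
  have hab : a * b = (a - c • t) * b + c • (t * (b - d • t)) + (c * d) • (t * t) := by
    simp only [Algebra.smul_def, map_mul]
    ring
  rw [hab]
  exact add_mem (add_mem (Ideal.mul_mem_right _ _ hc)
    (smul_of_tower_mem _ _ (Ideal.mul_mem_left _ _ hd))) (smul_of_tower_mem _ _ htt)

variable {ι : Type*} [Fintype ι] (b : Module.Basis ι A Ω[A⁄k])

theorem span_reducedD_eq_top (hk : Function.Surjective (algebraMap k (ResidueField A)))
    {x : ι → A} (hx : Ideal.span (Set.range x) = maximalIdeal A) :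
    span (ResidueField A) (Set.range (reducedD b (ResidueField A) ∘ x)) = ⊤ := by
  rw [← restrictScalars_eq_top_iff A]
  refine eq_top_of_forall_reducedD_mem b residue_surjective fun a => ?_
  obtain ⟨c, hc⟩ := exists_sub_algebraMap_mem_maximalIdeal hk a
  rw [restrictScalars_span A _ residue_surjective, ← sub_zero (reducedD b _ a),
    ← (reducedD b _).map_algebraMap c, ← map_sub]
  refine reducedD_mem_span b (fun j => (residue_eq_zero_iff _).2 ?_) (hx ▸ hc)
  exact hx ▸ Ideal.subset_span ⟨j, rfl⟩

theorem isUnit_det_toMatrix_D [DecidableEq ι]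
    (hk : Function.Surjective (algebraMap k (ResidueField A))) {x : ι → A}
    (hx : Ideal.span (Set.range x) = maximalIdeal A) :
    IsUnit (b.toMatrix fun j => D k A (x j)).det := by
  rw [← residue_ne_zero_iff_isUnit, ← ResidueField.algebraMap_eq, RingHom.map_det,
    ← isUnit_iff_ne_zero, ← Matrix.span_col_eq_top_iff_isUnit_det, col_mapMatrix_toMatrix_D]
  exact span_reducedD_eq_top b hk hx

theorem mem_maximalIdeal_sq_of_reducedD_eq_zero
    (hk : Function.Surjective (algebraMap k (ResidueField A)))
    {x : ι → A} (hx : Ideal.span (Set.range x) = maximalIdeal A) {a : A}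
    (ha : a ∈ maximalIdeal A) (hda : reducedD b (ResidueField A) a = 0) :
    a ∈ maximalIdeal A ^ 2 := by
  have hxm : ∀ j, x j ∈ maximalIdeal A := fun j => hx ▸ Ideal.subset_span ⟨j, rfl⟩
  have hind : LinearIndependent (ResidueField A) (reducedD b (ResidueField A) ∘ x) :=
    linearIndependent_of_top_le_span_of_card_eq_finrank (span_reducedD_eq_top b hk hx).ge
      (Module.finrank_fintype_fun_eq_card _).symm
  obtain ⟨g, rfl⟩ := (mem_span_range_iff_exists_fun A).1 (hx ▸ ha : a ∈ Ideal.span _)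
  simp only [smul_eq_mul, reducedD_sum_mul b (fun j => (residue_eq_zero_iff _).2 (hxm j)),
    ← algebraMap_smul (ResidueField A) (g _)] at hda
  have hg := Fintype.linearIndependent_iff.1 hind _ hda
  rw [sq]
  exact Ideal.sum_mem _ fun j _ => Ideal.mul_mem_mul ((residue_eq_zero_iff _).1 (hg j)) (hxm j)

variable {x y : ι → A} {I : Ideal A} {t : A}

theorem reducedD_notMem_span (hk : Function.Surjective (algebraMap k (ResidueField A)))
    (hx : Ideal.span (Set.range x) = maximalIdeal A) (hI : I = Ideal.span (Set.range y))
    (hIm : I ≤ maximalIdeal A) (hsq : maximalIdeal A ^ 2 ≤ I) (ht : t ∈ maximalIdeal A)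
    (htI : t ∉ I) :
    reducedD b (ResidueField A) t ∉
      span (ResidueField A) (Set.range (reducedD b (ResidueField A) ∘ y)) := by
  intro hmem
  obtain ⟨c, hc⟩ := (mem_span_range_iff_exists_fun _).1 hmem
  choose g hg using fun j => residue_surjective (c j)
  have hyI : ∀ j, y j ∈ I := fun j => hI ▸ Ideal.subset_span ⟨j, rfl⟩
  have hgy : ∑ j, g j * y j ∈ I := Ideal.sum_mem _ fun j _ => Ideal.mul_mem_left _ _ (hyI j)
  refine htI ((Submodule.sub_mem_iff_left _ hgy).1
    (hsq (mem_maximalIdeal_sq_of_reducedD_eq_zero b hk hx (sub_mem ht (hIm hgy)) ?_)))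
  rw [map_sub, reducedD_sum_mul b fun j => (residue_eq_zero_iff _).2 (hIm (hyI j)), ← hc,
    sub_eq_zero]
  simp only [← hg, Function.comp_apply]
  rfl

theorem span_insert_reducedD_eq_top (hk : Function.Surjective (algebraMap k (ResidueField A)))
    (hI : I = Ideal.span (Set.range y)) (hIm : I ≤ maximalIdeal A)
    (hgen : ∀ a ∈ maximalIdeal A, ∃ c : k, a - c • t ∈ I) :
    span (ResidueField A)
      (insert (reducedD b (ResidueField A) t) (Set.range (reducedD b (ResidueField A) ∘ y))) =
      ⊤ := by
  rw [← restrictScalars_eq_top_iff A]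
  refine eq_top_of_forall_reducedD_mem b residue_surjective fun a => ?_
  obtain ⟨c₀, hc₀⟩ := exists_sub_algebraMap_mem_maximalIdeal hk a
  obtain ⟨c₁, hc₁⟩ := hgen _ hc₀
  have hda : reducedD b (ResidueField A) a =
      reducedD b _ (a - algebraMap k A c₀ - c₁ • t) + c₁ • reducedD b _ t := by
    simp
  have hz := reducedD_mem_span b (R := ResidueField A)
    (fun j => (residue_eq_zero_iff _).2 (hIm (hI ▸ Ideal.subset_span ⟨j, rfl⟩))) (hI ▸ hc₁)
  rw [← restrictScalars_span A _ residue_surjective] at hz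
  rw [hda, restrictScalars_mem]
  exact add_mem (span_mono (Set.subset_insert _ _) hz)
    (smul_of_tower_mem _ _ (subset_span (Set.mem_insert _ _)))

theorem smul_mem_span_reducedD_quotient [NeZero (2 : k)]
    (hk : Function.Surjective (algebraMap k (ResidueField A))) (hI : I = Ideal.span (Set.range y))
    (hgen : ∀ a ∈ maximalIdeal A, ∃ c : k, a - c • t ∈ I) (htt : t * t ∈ I) (v : ι → A ⧸ I) :
    Ideal.Quotient.mk I t • v ∈ span (A ⧸ I) (Set.range (reducedD b (A ⧸ I) ∘ y)) := by
  have hS : ∀ z ∈ I, reducedD b (A ⧸ I) z ∈ span A (Set.range (reducedD b (A ⧸ I) ∘ y)) :=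
    fun z hz => reducedD_mem_span b (fun j => Ideal.Quotient.eq_zero_iff_mem.2
      (hI ▸ Ideal.subset_span ⟨j, rfl⟩)) (hI ▸ hz)
  have htdt : t • reducedD b (A ⧸ I) t = (2⁻¹ : k) • reducedD b (A ⧸ I) (t * t) := by
    rw [Derivation.leibniz, ← two_smul k, inv_smul_smul₀ two_ne_zero]
  have key : (span A (Set.range (reducedD b (A ⧸ I) ∘ y))).comap (t • LinearMap.id) = ⊤ := by
    refine eq_top_of_forall_reducedD_mem b Ideal.Quotient.mk_surjective fun a => ?_
    obtain ⟨c₀, hc₀⟩ := exists_sub_algebraMap_mem_maximalIdeal hk a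
    obtain ⟨c₁, hc₁⟩ := hgen _ hc₀
    have hda : reducedD b (A ⧸ I) a =
        reducedD b _ (a - algebraMap k A c₀ - c₁ • t) + c₁ • reducedD b _ t := by
      simp
    rw [mem_comap, LinearMap.smul_apply, LinearMap.id_apply, hda, smul_add, smul_comm t c₁, htdt,
      smul_smul]
    exact add_mem (smul_mem _ _ (hS _ hc₁)) (smul_of_tower_mem _ _ (hS _ htt))
  rw [← restrictScalars_mem A, restrictScalars_span A (A ⧸ I) Ideal.Quotient.mk_surjective]
  exact algebraMap_smul (A ⧸ I) t v ▸ (key.ge trivial : v ∈ comap _ _)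

theorem det_toMatrix_D_mem_maximalIdeal [DecidableEq ι]
    (hk : Function.Surjective (algebraMap k (ResidueField A)))
    (hx : Ideal.span (Set.range x) = maximalIdeal A) (hI : I = Ideal.span (Set.range y))
    (hIm : I ≤ maximalIdeal A) (hsq : maximalIdeal A ^ 2 ≤ I) (ht : t ∈ maximalIdeal A)
    (htI : t ∉ I) :
    (b.toMatrix fun j => D k A (y j)).det ∈ maximalIdeal A := by
  rw [← residue_eq_zero_iff, ← ResidueField.algebraMap_eq, RingHom.map_det, ← not_ne_iff,
    ← isUnit_iff_ne_zero, ← Matrix.span_col_eq_top_iff_isUnit_det, col_mapMatrix_toMatrix_D]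
  intro htop
  exact reducedD_notMem_span b hk hx hI hIm hsq ht htI (htop ▸ mem_top)

theorem det_toMatrix_D_notMem [DecidableEq ι] [NeZero (2 : k)]
    (hk : Function.Surjective (algebraMap k (ResidueField A)))
    (hx : Ideal.span (Set.range x) = maximalIdeal A) (hI : I = Ideal.span (Set.range y))
    (hIm : I ≤ maximalIdeal A) (hsq : maximalIdeal A ^ 2 ≤ I) (ht : t ∈ maximalIdeal A)
    (htI : t ∉ I) (hgen : ∀ a ∈ maximalIdeal A, ∃ c : k, a - c • t ∈ I) :
    (b.toMatrix fun j => D k A (y j)).det ∉ I := by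
  set N := b.toMatrix fun j => D k A (y j)
  intro hdet
  have hdet₀ : ((algebraMap A (ResidueField A)).mapMatrix N).det = 0 := by
    rw [← RingHom.map_det, ResidueField.algebraMap_eq, residue_eq_zero_iff]
    exact det_toMatrix_D_mem_maximalIdeal b hk hx hI hIm hsq ht htI
  refine Matrix.adjugate_ne_zero_of_span_insert_col_eq_top (by
    rw [col_mapMatrix_toMatrix_D]; exact span_insert_reducedD_eq_top b hk hI hIm hgen) hdet₀ ?_
  have htt : t * t ∈ I := hsq (sq t ▸ Ideal.pow_mem_pow ht 2)
  have htadj := Matrix.smul_adjugate_eq_zero (N := (algebraMap A (A ⧸ I)).mapMatrix N)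
    (s := Ideal.Quotient.mk I t) (by
      rw [col_mapMatrix_toMatrix_D]
      exact smul_mem_span_reducedD_quotient b hk hI hgen htt)
    (by rw [← RingHom.map_det]; exact Ideal.Quotient.eq_zero_iff_mem.2 hdet)
  rw [← RingHom.map_adjugate] at htadj ⊢
  ext i j
  have hmem : t * N.adjugate i j ∈ I :=
    Ideal.Quotient.eq_zero_iff_mem.1 (by simpa using congrFun (congrFun htadj i) j)
  have hm : N.adjugate i j ∈ maximalIdeal A := by
    by_contra hnm
    exact htI ((Ideal.mul_unit_mem_iff_mem I (not_not.1 ((mem_maximalIdeal _).not.1 hnm))).1 hmem)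
  simpa [ResidueField.algebraMap_eq] using (residue_eq_zero_iff _).2 hm

end ResidueField

theorem stmt15_general (n : ℕ) (A B : Type) [CommRing A] [CommRing B]
    [IsLocalRing A] [IsLocalRing B]
    [Algebra ℂ A] [Algebra ℂ B] [Algebra B A] [IsScalarTower ℂ B A]
    [SMulCommClass ℂ B A] [IsLocalHom (algebraMap B A)]
    (hregA : ∃ s : Finset A, s.card = n ∧ Ideal.span (s : Set A) = maximalIdeal A)
    (hregB : ∃ s : Finset B, s.card = n ∧ Ideal.span (s : Set B) = maximalIdeal B)
    (h2 : Module.finrank ℂ (A ⧸ Ideal.map (algebraMap B A) (maximalIdeal B)) = 2)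
    (bB : Module.Basis (Fin n) B (Ω[B⁄ℂ])) (bA : Module.Basis (Fin n) A (Ω[A⁄ℂ])) :
    (Matrix.of fun i j : Fin n =>
        bA.repr (KaehlerDifferential.map ℂ ℂ B A (bB j)) i).det ∈ maximalIdeal A ∧
    (Matrix.of fun i j : Fin n =>
        bA.repr (KaehlerDifferential.map ℂ ℂ B A (bB j)) i).det ∉ maximalIdeal A ^ 2 := by
  obtain ⟨sA, hsA, hspanA⟩ := hregA
  obtain ⟨sB, hsB, hspanB⟩ := hregB
  obtain ⟨x, hx⟩ := Finset.exists_fin_range_eq hsA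
  obtain ⟨y, hy⟩ := Finset.exists_fin_range_eq hsB
  rw [← hx] at hspanA
  rw [← hy] at hspanB
  have hI : Ideal.map (algebraMap B A) (maximalIdeal B) =
      Ideal.span (Set.range (algebraMap B A ∘ y)) := by
    rw [← hspanB, Ideal.map_span, Set.range_comp]
  have hIm := map_maximalIdeal_le (algebraMap B A)
  have : Module.Finite ℂ (A ⧸ Ideal.map (algebraMap B A) (maximalIdeal B)) :=
    Module.finite_of_finrank_eq_succ h2
  have hk := surjective_algebraMap_residueField (k := ℂ) hIm
  obtain ⟨t, ht, htI, hgen⟩ := exists_forall_sub_smul_mem_of_finrank_quotient_eq_two hk hIm h2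
  have hsq := maximalIdeal_sq_le_of_forall_sub_smul_mem ht htI hgen
  have hunit := (isUnit_det_toMatrix_D bB
    (surjective_algebraMap_residueField_of_isLocalHom hk) hspanB).map (algebraMap B A)
  have hdet := KaehlerDifferential.det_toMatrix_D_algebraMap bB bA y
  refine ⟨(Ideal.mul_unit_mem_iff_mem _ hunit).1 ?_, fun hmem => ?_⟩
  · exact hdet ▸ det_toMatrix_D_mem_maximalIdeal bA hk hspanA hI hIm hsq ht htI
  · exact det_toMatrix_D_notMem bA hk hspanA hI hIm hsq ht htI hgen
      (hdet ▸ Ideal.mul_mem_right _ _ (hsq hmem))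

/-- Local-ring formulation of: for a quasifinite map `ψ : X → Y` of smooth complex varieties
of the same dimension `n` and a point `x ∈ X` where the scheme-theoretic fibre has length
exactly `2` (ramification index 2), the Jacobian determinant of `ψ` — the determinant of the
induced map `ψ*Ω_Y → Ω_X` of free modules, cutting out the ramification divisor `R` — is part
of a minimal generating set of the maximal ideal at `x`, i.e. it lies in `m_x` but not in
`m_x²`; in particular `R` is smooth at `x`.

Here `B = O_{Y,y}` and `A = O_{X,x}` are regular local ℂ-algebras of dimension `n`
(regularity: the maximal ideal is generated by `n` elements), `algebraMap B A` is a local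
homomorphism, the modules of Kähler differentials are free with bases `bB`, `bA`, and the
fibre condition is `dim_ℂ (A / m_B·A) = 2`. -/
theorem stmt15 (n : ℕ) (A B : Type) [CommRing A] [CommRing B]
    [IsLocalRing A] [IsLocalRing B] [IsNoetherianRing A] [IsNoetherianRing B]
    [Algebra ℂ A] [Algebra ℂ B] [Algebra B A] [IsScalarTower ℂ B A]
    [SMulCommClass ℂ B A] [IsLocalHom (algebraMap B A)]
    (hdimA : ringKrullDim A = n) (hdimB : ringKrullDim B = n)
    (hregA : ∃ s : Finset A, s.card = n ∧ Ideal.span (s : Set A) = maximalIdeal A)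
    (hregB : ∃ s : Finset B, s.card = n ∧ Ideal.span (s : Set B) = maximalIdeal B)
    (h2 : Module.finrank ℂ (A ⧸ Ideal.map (algebraMap B A) (maximalIdeal B)) = 2)
    (bB : Module.Basis (Fin n) B (Ω[B⁄ℂ])) (bA : Module.Basis (Fin n) A (Ω[A⁄ℂ])) :
    (Matrix.of fun i j : Fin n =>
        bA.repr (KaehlerDifferential.map ℂ ℂ B A (bB j)) i).det ∈ maximalIdeal A ∧
    (Matrix.of fun i j : Fin n =>
        bA.repr (KaehlerDifferential.map ℂ ℂ B A (bB j)) i).det ∉ maximalIdeal A ^ 2 :=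
  stmt15_general n A B hregA hregB h2 bB bA
end
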